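/- arXiv:1401.1015 — 13 statements merged into one kernel-verified Lean document; each statement's English description precedes it below -/
import Mathlib

section
/- Let X, Y, V be finite-dimensional real normed vector spaces, let E : X × Y → V be continuously differentiable, let v ∈ V, and let (x₀,y₀) ∈ X × Y satisfy E(x₀,y₀) = v with the total derivative D := DE(x₀,y₀) : X × Y → V surjective (so v is a regular value at (x₀,y₀), and ker D is the tangent space at (x₀,y₀) to the level set E⁻¹(v)). Then the image of ker D under the projection (x,y) ↦ x is a proper subspace of X (i.e., (x₀,y₀) is a critical point of the projection restricted to the level set E⁻¹(v)) if and only if the restriction of D to the subspace {0} × Y is not surjective onto V (equivalently, the partial derivative of E with respect to the Y-variable at (x₀,y₀) has rank strictly less than dim V). -/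
namespace LinearMap

variable {R M N P : Type*} [Ring R] [AddCommGroup M] [AddCommGroup N] [AddCommGroup P]
  [Module R M] [Module R N] [Module R P]

/-- Both directions rest on `D (x, y) - D (x, y') = D (0, y - y')`. -/
theorem map_fst_ker_eq_top_iff_range_le_range_comp_inr (D : M × N →ₗ[R] P) :
    (ker D).map (fst R M N) = ⊤ ↔ range D ≤ range (D ∘ₗ inr R M N) := by
  constructor
  · rintro h _ ⟨⟨x, y⟩, rfl⟩
    obtain ⟨⟨x, y'⟩, hker, rfl⟩ : x ∈ (ker D).map (fst R M N) := h ▸ Submodule.mem_top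
    refine ⟨y - y', ?_⟩
    rw [fst_apply]
    have hsplit : ((x, y) : M × N) = (x, y') + (0, y - y') := by simp
    rw [hsplit, map_add, mem_ker.mp hker, zero_add, comp_apply, inr_apply]
  · intro h
    refine eq_top_iff.mpr fun x _ => ?_
    obtain ⟨y, hy⟩ := h (mem_range_self D (x, 0))
    refine ⟨(x, -y), mem_ker.mpr ?_, rfl⟩
    have hsplit : ((x, -y) : M × N) = (x, 0) - (0, y) := by simp
    rw [hsplit, map_sub, ← hy, comp_apply, inr_apply, sub_self]

theorem map_fst_ker_eq_top_iff_surjective_comp_inr {D : M × N →ₗ[R] P}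
    (hD : Function.Surjective D) :
    (ker D).map (fst R M N) = ⊤ ↔ Function.Surjective (D ∘ₗ inr R M N) := by
  rw [map_fst_ker_eq_top_iff_range_le_range_comp_inr, range_eq_top.mpr hD, top_le_iff,
    range_eq_top]

end LinearMap

theorem stmt0_general (X Y V : Type*)
    [NormedAddCommGroup X] [NormedSpace ℝ X]
    [NormedAddCommGroup Y] [NormedSpace ℝ Y]
    [NormedAddCommGroup V] [NormedSpace ℝ V]
    (E : X × Y → V) (x₀ : X) (y₀ : Y)
    (hreg : Function.Surjective (fderiv ℝ E (x₀, y₀))) :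
    (LinearMap.ker (fderiv ℝ E (x₀, y₀) : X × Y →ₗ[ℝ] V)).map (LinearMap.fst ℝ X Y) ≠ ⊤ ↔
      ¬ Function.Surjective (fun y : Y => fderiv ℝ E (x₀, y₀) (0, y)) :=
  not_congr (LinearMap.map_fst_ker_eq_top_iff_surjective_comp_inr hreg)

/-- Lemma 3.2.4: a point of a regular level set of `E : X × Y → V` is a critical
point of the projection `(x, y) ↦ x` restricted to the level set iff the partial
derivative of `E` in the `Y`-direction is not surjective. -/
theorem stmt0 (X Y V : Type*)
    [NormedAddCommGroup X] [NormedSpace ℝ X] [FiniteDimensional ℝ X]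
    [NormedAddCommGroup Y] [NormedSpace ℝ Y] [FiniteDimensional ℝ Y]
    [NormedAddCommGroup V] [NormedSpace ℝ V] [FiniteDimensional ℝ V]
    (E : X × Y → V) (hE : ContDiff ℝ 1 E) (v : V) (x₀ : X) (y₀ : Y)
    (hEv : E (x₀, y₀) = v)
    (hreg : Function.Surjective (fderiv ℝ E (x₀, y₀))) :
    (LinearMap.ker (fderiv ℝ E (x₀, y₀) : X × Y →ₗ[ℝ] V)).map (LinearMap.fst ℝ X Y) ≠ ⊤ ↔
      ¬ Function.Surjective (fun y : Y => fderiv ℝ E (x₀, y₀) (0, y)) :=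
  stmt0_general X Y V E x₀ y₀ hreg
end

section
/- Let A₁, A₂, A₃ > 0, let Π, f : ℝ³ → ℝ be differentiable, and let κ : ℝ³ → ℝ³ be a continuous map. Consider the Euler–Poisson vector field X on ℝ³ × ℝ³ (with coordinates (ν, ω)) defined by the equations A·ω' + ω × (A·ω + κ(ν)) = ν × ∇Π(ν) and ν' = ν × ω, where A·ω = (A₁ω₁, A₂ω₂, A₃ω₃) and × is the cross product on ℝ³. Define G(ν, ω) = A₁ω₁ν₁ + A₂ω₂ν₂ + A₃ω₃ν₃ + f(ν). Then the derivative of G along X (the inner product of the gradient of G on ℝ⁶ with X) vanishes at every point (ν, ω) with ν₁² + ν₂² + ν₃² = 1 if and only if (κ(ν) − ∇f(ν)) × ν = 0 for every ν with ν₁² + ν₂² + ν₃² = 1 (equivalently, κ(ν) = F(ν)·ν + ∇f(ν) on the unit sphere for some scalar function F). -/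
/-!
Along the flow, `d/dt (Aω ⬝ ν + f ν) = Aω' ⬝ ν + Aω ⬝ ν' + ∇f ⬝ ν'`. Substituting the equations of
motion, every term cancels except `-ω ⬝ ((κ - ∇f) × ν)`, which is linear in `ω`; it vanishes for all
`ω` exactly when `(κ - ∇f) × ν = 0`, as one sees by taking `ω = (κ - ∇f) × ν`.
-/

open Matrix

section
variable {n : Type*} [Fintype n]

theorem ContinuousLinearMap.apply_eq_dotProduct_single [DecidableEq n]
    (L : (n → ℝ) →L[ℝ] ℝ) (u : n → ℝ) : L u = u ⬝ᵥ fun i => L (Pi.single i 1) := by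
  conv_lhs => rw [pi_eq_sum_univ' u]
  simp [dotProduct]

theorem fderiv_weightedPairing_add_apply (a : n → ℝ) {f : (n → ℝ) → ℝ} {ν : n → ℝ}
    (hf : DifferentiableAt ℝ f ν) (ω u w : n → ℝ) :
    fderiv ℝ (fun p : (n → ℝ) × (n → ℝ) => ∑ i, a i * p.2 i * p.1 i + f p.1) (ν, ω) (u, w)
      = (a * ω) ⬝ᵥ u + ν ⬝ᵥ (a * w) + fderiv ℝ f ν u := by
  let fstᵢ (i : n) := (ContinuousLinearMap.proj i).comp (ContinuousLinearMap.fst ℝ (n → ℝ) (n → ℝ))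
  let sndᵢ (i : n) := (ContinuousLinearMap.proj i).comp (ContinuousLinearMap.snd ℝ (n → ℝ) (n → ℝ))
  have hG : HasFDerivAt (fun p : (n → ℝ) × (n → ℝ) => ∑ i, a i * p.2 i * p.1 i + f p.1) _ (ν, ω) :=
    (HasFDerivAt.fun_sum fun i _ => ((sndᵢ i).hasFDerivAt.const_mul (a i)).fun_mul
      (fstᵢ i).hasFDerivAt).fun_add (hf.hasFDerivAt.comp (ν, ω) hasFDerivAt_fst)
  rw [hG.fderiv]
  simp [fstᵢ, sndᵢ, dotProduct, Finset.sum_add_distrib]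

end

/-- The `∇Π` term drops out because `ν × ∇Π ⟂ ν`, and the `Aω` terms cancel by cyclicity of the
triple product, whatever `Aω` is. -/
theorem dotProduct_eulerPoisson {R : Type*} [CommRing R] (ν ω g a k h : Fin 3 → R) :
    a ⬝ᵥ (ν ⨯₃ ω) + ν ⬝ᵥ (ν ⨯₃ g - ω ⨯₃ (a + k)) + (ν ⨯₃ ω) ⬝ᵥ h = -(ω ⬝ᵥ (k - h) ⨯₃ ν) := by
  rw [map_add, map_sub, LinearMap.sub_apply, dotProduct_sub, dotProduct_sub, dotProduct_add,
    dot_self_cross, dotProduct_comm _ h, triple_product_permutation a,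
    triple_product_permutation h]
  simp only [triple_product_permutation ν ω]
  ring

theorem stmt4_general (A₁ A₂ A₃ : ℝ) (hA₁ : 0 < A₁) (hA₂ : 0 < A₂) (hA₃ : 0 < A₃)
    (P f : (Fin 3 → ℝ) → ℝ) (hf : Differentiable ℝ f)
    (κ : (Fin 3 → ℝ) → (Fin 3 → ℝ)) :
    let Amul : (Fin 3 → ℝ) → (Fin 3 → ℝ) := fun v => ![A₁ * v 0, A₂ * v 1, A₃ * v 2]
    let grad : ((Fin 3 → ℝ) → ℝ) → (Fin 3 → ℝ) → (Fin 3 → ℝ) :=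
      fun F ν => fun i => fderiv ℝ F ν (Pi.single i 1)
    let X : (Fin 3 → ℝ) × (Fin 3 → ℝ) → (Fin 3 → ℝ) × (Fin 3 → ℝ) :=
      fun p => (crossProduct p.1 p.2,
        ![(crossProduct p.1 (grad P p.1) - crossProduct p.2 (Amul p.2 + κ p.1)) 0 / A₁,
          (crossProduct p.1 (grad P p.1) - crossProduct p.2 (Amul p.2 + κ p.1)) 1 / A₂,
          (crossProduct p.1 (grad P p.1) - crossProduct p.2 (Amul p.2 + κ p.1)) 2 / A₃])
    let G : (Fin 3 → ℝ) × (Fin 3 → ℝ) → ℝ :=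
      fun p => A₁ * p.2 0 * p.1 0 + A₂ * p.2 1 * p.1 1 + A₃ * p.2 2 * p.1 2 + f p.1
    ((∀ ν ω : Fin 3 → ℝ, ν 0 ^ 2 + ν 1 ^ 2 + ν 2 ^ 2 = 1 →
        fderiv ℝ G (ν, ω) (X (ν, ω)) = 0) ↔
      (∀ ν : Fin 3 → ℝ, ν 0 ^ 2 + ν 1 ^ 2 + ν 2 ^ 2 = 1 →
        crossProduct (κ ν - grad f ν) ν = 0)) := by
  intro Amul grad X G
  set a : Fin 3 → ℝ := ![A₁, A₂, A₃]
  have hG : G = fun p => ∑ i, a i * p.2 i * p.1 i + f p.1 := by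
    funext p; simp [G, a, Fin.sum_univ_three]
  have hAmul (v : Fin 3 → ℝ) : Amul v = a * v := by
    funext i; fin_cases i <;> rfl
  have hAω' (ν ω : Fin 3 → ℝ) :
      a * (X (ν, ω)).2 = ν ⨯₃ grad P ν - ω ⨯₃ (Amul ω + κ ν) := by
    funext i
    fin_cases i
    exacts [mul_div_cancel₀ _ hA₁.ne', mul_div_cancel₀ _ hA₂.ne', mul_div_cancel₀ _ hA₃.ne']
  have hLie (ν ω : Fin 3 → ℝ) :
      fderiv ℝ G (ν, ω) (X (ν, ω)) = -(ω ⬝ᵥ (κ ν - grad f ν) ⨯₃ ν) := by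
    rw [hG, fderiv_weightedPairing_add_apply a (hf ν), hAω', ← hAmul,
      ContinuousLinearMap.apply_eq_dotProduct_single]
    exact dotProduct_eulerPoisson ν ω _ _ _ _
  simp only [hLie, neg_eq_zero]
  refine forall_congr' fun ν => ⟨fun h hν => dotProduct_self_eq_zero.1 (h _ hν), ?_⟩
  intro h ω hν
  rw [h hν, dotProduct_zero]

/-- Theorem 2.4.1 in Euler–Poisson form: for the rigid body with axially
symmetric potential `Π(ν)` and gyroscopic coefficient vector `κ(ν)`, the
function `G(ν,ω) = A₁ω₁ν₁ + A₂ω₂ν₂ + A₃ω₃ν₃ + f(ν)` has vanishing derivative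
along the Euler–Poisson vector field at every point of the unit sphere iff
`(κ(ν) − ∇f(ν)) × ν = 0` on the unit sphere. -/
theorem stmt4 (A₁ A₂ A₃ : ℝ) (hA₁ : 0 < A₁) (hA₂ : 0 < A₂) (hA₃ : 0 < A₃)
    (P f : (Fin 3 → ℝ) → ℝ) (hP : Differentiable ℝ P) (hf : Differentiable ℝ f)
    (κ : (Fin 3 → ℝ) → (Fin 3 → ℝ)) (hκ : Continuous κ) :
    let Amul : (Fin 3 → ℝ) → (Fin 3 → ℝ) := fun v => ![A₁ * v 0, A₂ * v 1, A₃ * v 2]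
    let grad : ((Fin 3 → ℝ) → ℝ) → (Fin 3 → ℝ) → (Fin 3 → ℝ) :=
      fun F ν => fun i => fderiv ℝ F ν (Pi.single i 1)
    let X : (Fin 3 → ℝ) × (Fin 3 → ℝ) → (Fin 3 → ℝ) × (Fin 3 → ℝ) :=
      fun p => (crossProduct p.1 p.2,
        ![(crossProduct p.1 (grad P p.1) - crossProduct p.2 (Amul p.2 + κ p.1)) 0 / A₁,
          (crossProduct p.1 (grad P p.1) - crossProduct p.2 (Amul p.2 + κ p.1)) 1 / A₂,
          (crossProduct p.1 (grad P p.1) - crossProduct p.2 (Amul p.2 + κ p.1)) 2 / A₃])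
    let G : (Fin 3 → ℝ) × (Fin 3 → ℝ) → ℝ :=
      fun p => A₁ * p.2 0 * p.1 0 + A₂ * p.2 1 * p.1 1 + A₃ * p.2 2 * p.1 2 + f p.1
    ((∀ ν ω : Fin 3 → ℝ, ν 0 ^ 2 + ν 1 ^ 2 + ν 2 ^ 2 = 1 →
        fderiv ℝ G (ν, ω) (X (ν, ω)) = 0) ↔
      (∀ ν : Fin 3 → ℝ, ν 0 ^ 2 + ν 1 ^ 2 + ν 2 ^ 2 = 1 →
        crossProduct (κ ν - grad f ν) ν = 0)) :=
  stmt4_general A₁ A₂ A₃ hA₁ hA₂ hA₃ P f hf κ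
end

section
/- Let a > b > c > 0 and let λ₁, λ₂, λ₃ be nonzero real numbers. Define h, k : ℝ ∖ {a, b, c} → ℝ by h(σ) = (σ²/2)·(aλ₁²/(a−σ)² + bλ₂²/(b−σ)² + cλ₃²/(c−σ)²) and k(σ) = a²λ₁²/(a−σ)² + b²λ₂²/(b−σ)² + c²λ₃²/(c−σ)². Then the set of points σ ∈ ℝ ∖ {a, b, c} at which h'(σ) = 0 and k'(σ) = 0 simultaneously consists of exactly two points, one lying in the open interval (c, b) and the other in the open interval (b, a). -/
/-!
Both derivatives are multiples of `F(σ) = Σ a²λ₁²/(a - σ)³`: `k' = 2F` and `h' = σF`, the latter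
because `λ²/(a - σ)² + σλ²/(a - σ)³ = aλ²/(a - σ)³`. Since `F' = 3 Σ a²λ₁²/(a - σ)⁴ > 0`, `F` is
strictly increasing on each interval of `ℝ ∖ {a, b, c}`, so it has at most one zero there. It is
positive on `(-∞, c)` and negative on `(a, ∞)`, while the polynomial `F(σ)·((a - σ)(b - σ)(c - σ))³`
is positive at `c` and `a` and negative at `b`, giving one zero in each of `(c, b)` and `(b, a)`.
-/

open Set

theorem hasDerivAt_div_sub_pow (u x σ : ℝ) (n : ℕ) (hσ : σ ≠ x) :
    HasDerivAt (fun s => u / (x - s) ^ n) (n * u / (x - σ) ^ (n + 1)) σ := by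
  have hx : x - σ ≠ 0 := sub_ne_zero.2 hσ.symm
  refine ((hasDerivAt_const σ u).fun_div (((hasDerivAt_id σ).const_sub x).fun_pow n)
    (pow_ne_zero n hx)).congr_deriv ?_
  rcases n with _ | n
  · simp
  · simp only [id, Nat.add_sub_cancel]
    field_simp
    ring

noncomputable def poleSum (a b c u v w : ℝ) (n : ℕ) (σ : ℝ) : ℝ :=
  u / (a - σ) ^ n + v / (b - σ) ^ n + w / (c - σ) ^ n

def clearedPoleSum (a b c u v w σ : ℝ) : ℝ :=
  u * ((b - σ) * (c - σ)) ^ 3 + v * ((a - σ) * (c - σ)) ^ 3 + w * ((a - σ) * (b - σ)) ^ 3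

section

variable {a b c u v w σ : ℝ}

theorem hasDerivAt_poleSum (n : ℕ) (ha : σ ≠ a) (hb : σ ≠ b) (hc : σ ≠ c) :
    HasDerivAt (poleSum a b c u v w n) (n * poleSum a b c u v w (n + 1) σ) σ := by
  refine (((hasDerivAt_div_sub_pow u a σ n ha).fun_add (hasDerivAt_div_sub_pow v b σ n hb)).fun_add
    (hasDerivAt_div_sub_pow w c σ n hc)).congr_deriv ?_
  simp only [poleSum]
  ring

theorem poleSum_add_mul_poleSum_succ (n : ℕ) (ha : σ ≠ a) (hb : σ ≠ b) (hc : σ ≠ c) :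
    poleSum a b c u v w n σ + σ * poleSum a b c u v w (n + 1) σ =
      poleSum a b c (a * u) (b * v) (c * w) (n + 1) σ := by
  have ha' : a - σ ≠ 0 := sub_ne_zero.2 ha.symm
  have hb' : b - σ ≠ 0 := sub_ne_zero.2 hb.symm
  have hc' : c - σ ≠ 0 := sub_ne_zero.2 hc.symm
  simp only [poleSum]
  field_simp
  ring

theorem hasDerivAt_sq_div_two_mul_poleSum (ha : σ ≠ a) (hb : σ ≠ b) (hc : σ ≠ c) :
    HasDerivAt (fun s => s ^ 2 / 2 * poleSum a b c u v w 2 s)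
      (σ * poleSum a b c (a * u) (b * v) (c * w) 3 σ) σ := by
  refine (((hasDerivAt_pow 2 σ).div_const 2).fun_mul (hasDerivAt_poleSum 2 ha hb hc)).congr_deriv ?_
  rw [← poleSum_add_mul_poleSum_succ 2 ha hb hc]
  push_cast
  ring

theorem poleSum_three_mul_eq_clearedPoleSum (ha : σ ≠ a) (hb : σ ≠ b) (hc : σ ≠ c) :
    poleSum a b c u v w 3 σ * ((a - σ) * (b - σ) * (c - σ)) ^ 3 =
      clearedPoleSum a b c u v w σ := by
  have ha' : a - σ ≠ 0 := sub_ne_zero.2 ha.symm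
  have hb' : b - σ ≠ 0 := sub_ne_zero.2 hb.symm
  have hc' : c - σ ≠ 0 := sub_ne_zero.2 hc.symm
  simp only [poleSum, clearedPoleSum]
  field_simp

variable (hu : 0 < u) (hv : 0 < v) (hw : 0 < w)
include hu hv hw

theorem strictMonoOn_poleSum_three {s : Set ℝ} (hs : Convex ℝ s) (ha : a ∉ s) (hb : b ∉ s)
    (hc : c ∉ s) : StrictMonoOn (poleSum a b c u v w 3) s := by
  have hderiv : ∀ x ∈ s, HasDerivAt (poleSum a b c u v w 3) (3 * poleSum a b c u v w 4 x) x :=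
    fun x hx => hasDerivAt_poleSum 3 (ne_of_mem_of_not_mem hx ha) (ne_of_mem_of_not_mem hx hb)
      (ne_of_mem_of_not_mem hx hc)
  refine strictMonoOn_of_deriv_pos hs
    (fun x hx => (hderiv x hx).continuousAt.continuousWithinAt) fun x hx => ?_
  have hx := interior_subset hx
  have ha' : a - x ≠ 0 := sub_ne_zero.2 (ne_of_mem_of_not_mem hx ha).symm
  have hb' : b - x ≠ 0 := sub_ne_zero.2 (ne_of_mem_of_not_mem hx hb).symm
  have hc' : c - x ≠ 0 := sub_ne_zero.2 (ne_of_mem_of_not_mem hx hc).symm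
  rw [(hderiv x hx).deriv, poleSum]
  positivity

theorem poleSum_three_pos (hσ : σ < c) (hcb : c < b) (hba : b < a) :
    0 < poleSum a b c u v w 3 σ := by
  have : 0 < c - σ := by linarith
  have : 0 < b - σ := by linarith
  have : 0 < a - σ := by linarith
  rw [poleSum]
  positivity

theorem poleSum_three_neg (hσ : a < σ) (hcb : c < b) (hba : b < a) :
    poleSum a b c u v w 3 σ < 0 := by
  have hneg : ∀ {x y : ℝ}, 0 < y → x < σ → y / (x - σ) ^ 3 < 0 := fun hy hx =>
    div_neg_of_pos_of_neg hy (Odd.pow_neg (by decide) (by linarith))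
  rw [poleSum]
  linarith [hneg hu (show a < σ by linarith), hneg hv (show b < σ by linarith),
    hneg hw (show c < σ by linarith)]

theorem exists_poleSum_three_eq_zero (hcb : c < b) (hba : b < a) :
    (∃ σ ∈ Ioo c b, poleSum a b c u v w 3 σ = 0) ∧ ∃ σ ∈ Ioo b a, poleSum a b c u v w 3 σ = 0 := by
  have hcont : Continuous (clearedPoleSum a b c u v w) := by
    unfold clearedPoleSum; fun_prop
  have pos_at_c : 0 < clearedPoleSum a b c u v w c := by
    have : clearedPoleSum a b c u v w c = w * ((a - c) * (b - c)) ^ 3 := by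
      unfold clearedPoleSum; ring
    rw [this]
    have : 0 < (a - c) * (b - c) := mul_pos (by linarith) (by linarith)
    positivity
  have neg_at_b : clearedPoleSum a b c u v w b < 0 := by
    have : clearedPoleSum a b c u v w b = v * ((a - b) * (c - b)) ^ 3 := by
      unfold clearedPoleSum; ring
    rw [this]
    exact mul_neg_of_pos_of_neg hv
      (Odd.pow_neg (by decide) (mul_neg_of_pos_of_neg (by linarith) (by linarith)))
  have pos_at_a : 0 < clearedPoleSum a b c u v w a := by
    have : clearedPoleSum a b c u v w a = u * ((b - a) * (c - a)) ^ 3 := by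
      unfold clearedPoleSum; ring
    rw [this]
    have : 0 < (b - a) * (c - a) := mul_pos_of_neg_of_neg (by linarith) (by linarith)
    positivity
  have of_cleared {σ : ℝ} (ha : σ ≠ a) (hb : σ ≠ b) (hc : σ ≠ c)
      (h0 : clearedPoleSum a b c u v w σ = 0) : poleSum a b c u v w 3 σ = 0 := by
    rw [← poleSum_three_mul_eq_clearedPoleSum ha hb hc] at h0
    refine (mul_eq_zero.1 h0).resolve_right (pow_ne_zero 3 ?_)
    simp only [mul_ne_zero_iff, sub_ne_zero]
    exact ⟨⟨ha.symm, hb.symm⟩, hc.symm⟩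
  obtain ⟨σ₁, hσ₁, h₁⟩ := intermediate_value_Ioo' hcb.le hcont.continuousOn ⟨neg_at_b, pos_at_c⟩
  obtain ⟨σ₂, hσ₂, h₂⟩ := intermediate_value_Ioo hba.le hcont.continuousOn ⟨neg_at_b, pos_at_a⟩
  exact ⟨⟨σ₁, hσ₁, of_cleared (hσ₁.2.trans hba).ne hσ₁.2.ne hσ₁.1.ne' h₁⟩,
    σ₂, hσ₂, of_cleared hσ₂.2.ne hσ₂.1.ne' (hcb.trans hσ₂.1).ne' h₂⟩

theorem poleSum_three_zero_set (hcb : c < b) (hba : b < a) :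
    ∃ σ₁ ∈ Ioo c b, ∃ σ₂ ∈ Ioo b a,
      {σ | σ ≠ a ∧ σ ≠ b ∧ σ ≠ c ∧ poleSum a b c u v w 3 σ = 0} = {σ₁, σ₂} := by
  obtain ⟨⟨σ₁, hσ₁, h₁⟩, σ₂, hσ₂, h₂⟩ := exists_poleSum_three_eq_zero hu hv hw hcb hba
  refine ⟨σ₁, hσ₁, σ₂, hσ₂, Subset.antisymm ?_ ?_⟩
  · rintro σ ⟨ha, hb, hc, h0⟩
    rcases hc.lt_or_gt with hσc | hσc
    · exact absurd h0 (poleSum_three_pos hu hv hw hσc hcb hba).ne'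
    rcases hb.lt_or_gt with hσb | hσb
    · refine Or.inl ((strictMonoOn_poleSum_three hu hv hw (convex_Ioo c b)
        (fun h => (h.2.trans hba).false) (fun h => h.2.false) (fun h => h.1.false)).injOn
        ⟨hσc, hσb⟩ hσ₁ (h0.trans h₁.symm))
    rcases ha.lt_or_gt with hσa | hσa
    · refine Or.inr ((strictMonoOn_poleSum_three hu hv hw (convex_Ioo b a)
        (fun h => h.2.false) (fun h => h.1.false) (fun h => (h.1.trans hcb).false)).injOn
        ⟨hσb, hσa⟩ hσ₂ (h0.trans h₂.symm))
    · exact absurd h0 (poleSum_three_neg hu hv hw hσa hcb hba).ne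
  · rintro σ (rfl | rfl)
    · exact ⟨(hσ₁.2.trans hba).ne, hσ₁.2.ne, hσ₁.1.ne', h₁⟩
    · exact ⟨hσ₂.2.ne, hσ₂.1.ne', (hcb.trans hσ₂.1).ne', h₂⟩

end

/-- The branch `σ ↦ (k(σ), h(σ))` of the bifurcation set of the free gyrostat
(with `a > b > c > 0` the inverse moments of inertia and nonzero gyrostatic
momenta `λ₁, λ₂, λ₃`) has exactly two cusps: the common zeros of `h'` and `k'`
on `ℝ ∖ {a, b, c}` are exactly two points, one in `(c, b)` and one in `(b, a)`. -/
theorem stmt7 (a b c l1 l2 l3 : ℝ) (hab : b < a) (hbc : c < b) (hc : 0 < c)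
    (h1 : l1 ≠ 0) (h2 : l2 ≠ 0) (h3 : l3 ≠ 0) :
    let h : ℝ → ℝ := fun σ => σ^2/2 *
      (a*l1^2/(a-σ)^2 + b*l2^2/(b-σ)^2 + c*l3^2/(c-σ)^2)
    let k : ℝ → ℝ := fun σ =>
      a^2*l1^2/(a-σ)^2 + b^2*l2^2/(b-σ)^2 + c^2*l3^2/(c-σ)^2
    ∃ σ₁ σ₂ : ℝ, σ₁ ∈ Set.Ioo c b ∧ σ₂ ∈ Set.Ioo b a ∧
      {σ : ℝ | σ ≠ a ∧ σ ≠ b ∧ σ ≠ c ∧ deriv h σ = 0 ∧ deriv k σ = 0} = {σ₁, σ₂} := by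
  intro h k
  have hb0 : 0 < b := hc.trans hbc
  have ha0 : 0 < a := hb0.trans hab
  obtain ⟨σ₁, hσ₁, σ₂, hσ₂, hzeros⟩ :=
    poleSum_three_zero_set (u := a ^ 2 * l1 ^ 2) (v := b ^ 2 * l2 ^ 2) (w := c ^ 2 * l3 ^ 2)
      (by positivity) (by positivity) (by positivity) hbc hab
  set F := poleSum a b c (a ^ 2 * l1 ^ 2) (b ^ 2 * l2 ^ 2) (c ^ 2 * l3 ^ 2) 3
  refine ⟨σ₁, σ₂, hσ₁, hσ₂, ?_⟩
  rw [← hzeros]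
  ext σ
  simp only [mem_ofPred_eq, and_congr_right_iff]
  intro hσa hσb hσc
  have hk : deriv k σ = 2 * F σ :=
    (hasDerivAt_poleSum (u := a ^ 2 * l1 ^ 2) (v := b ^ 2 * l2 ^ 2) (w := c ^ 2 * l3 ^ 2)
      2 hσa hσb hσc).deriv.trans (by norm_num [F])
  have hh : deriv h σ = σ * F σ := by
    have hweights :
        poleSum a b c (a * (a * l1 ^ 2)) (b * (b * l2 ^ 2)) (c * (c * l3 ^ 2)) 3 = F := by
      funext s; simp only [poleSum, F]; ring
    rw [← hweights]
    exact (hasDerivAt_sq_div_two_mul_poleSum hσa hσb hσc).deriv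
  rw [hh, hk]
  constructor
  · rintro ⟨-, hk0⟩
    linarith
  · intro h0
    simp only [h0, mul_zero, and_self]
end

section
/- Let A₁, A₂, A₃ > 0 and g ∈ ℝ, and write A·v = (A₁v₁, A₂v₂, A₃v₃) for v ∈ ℝ³. Then the map (ν, ξ) ↦ (ν, ω) with ω = (ξ × (A·ν) + g·ν)/((A·ν)·ν) is a well-defined bijection from the set T = {(ν, ξ) ∈ ℝ³ × ℝ³ : ν₁² + ν₂² + ν₃² = 1 and ν·ξ = 0} onto the set G_g = {(ν, ω) ∈ ℝ³ × ℝ³ : ν₁² + ν₂² + ν₃² = 1 and (A·ω)·ν = g}, and its inverse is given by (ν, ω) ↦ (ν, ν × ω). (Here × is the cross product and · the dot product on ℝ³; well-definedness uses that (A·ν)·ν > 0 for unit ν.) -/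
/-!
Write `w = Aν`; since `A` is diagonal, `Aω·ν = ω·w`, and `d = ν·w > 0` on the unit sphere.
The vector `ω = (ξ × w + gν)/d` satisfies `ω·w = g` because `(ξ × w)·w = 0`. The vector triple
product expansion gives `ν × ω = ((ν·w)ξ - (ν·ξ)w)/d = ξ` when `ν·ξ = 0`, and conversely
`((ν × ω) × w + gν)/d = ((ν·w)ω - (ω·w)ν + gν)/d = ω` when `ω·w = g`.
-/

open Matrix

section Kolosov

variable {K : Type*} [Field K] (w : Fin 3 → K) (g : K) {ν : Fin 3 → K}

def kolosov (ν ξ : Fin 3 → K) : Fin 3 → K :=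
  (ν ⬝ᵥ w)⁻¹ • (ξ ⨯₃ w + g • ν)

variable {w}

lemma kolosov_dotProduct (hν : ν ⬝ᵥ w ≠ 0) (ξ : Fin 3 → K) :
    kolosov w g ν ξ ⬝ᵥ w = g := by
  rw [kolosov, smul_dotProduct, add_dotProduct, smul_dotProduct, dotProduct_comm (ξ ⨯₃ w),
    dot_cross_self, smul_eq_mul, smul_eq_mul, zero_add, mul_left_comm, inv_mul_cancel₀ hν,
    mul_one]

lemma cross_kolosov (hν : ν ⬝ᵥ w ≠ 0) {ξ : Fin 3 → K} (hξ : ν ⬝ᵥ ξ = 0) :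
    ν ⨯₃ kolosov w g ν ξ = ξ := by
  rw [kolosov, map_smul, map_add, map_smul, cross_self, smul_zero, add_zero,
    cross_cross_eq_smul_sub_smul', dotProduct_comm ξ, hξ, zero_smul, sub_zero,
    inv_smul_smul₀ hν]

lemma kolosov_cross (hν : ν ⬝ᵥ w ≠ 0) {ω : Fin 3 → K} (hω : ω ⬝ᵥ w = g) :
    kolosov w g ν (ν ⨯₃ ω) = ω := by
  rw [kolosov, cross_cross_eq_smul_sub_smul, hω, sub_add_cancel, inv_smul_smul₀ hν]

end Kolosov

lemma weighted_sum_sq_pos {a b c x y z : ℝ} (ha : 0 < a) (hb : 0 < b) (hc : 0 < c)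
    (h : x ^ 2 + y ^ 2 + z ^ 2 = 1) : 0 < a * x ^ 2 + b * y ^ 2 + c * z ^ 2 := by
  have hm : 0 < min a (min b c) := lt_min ha (lt_min hb hc)
  nlinarith [min_le_left a (min b c), min_le_left b c, min_le_right b c,
    min_le_right a (min b c), sq_nonneg x, sq_nonneg y, sq_nonneg z]

/-- The Kolosov substitution: `(ν, ξ) ↦ (ν, ω)` with
`ω = (ξ × Aν + g ν)/(Aν · ν)` is a bijection from the tangent bundle of the
Poisson sphere `T = {(ν, ξ) : |ν| = 1, ν·ξ = 0}` onto the level set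
`G_g = {(ν, ω) : |ν| = 1, Aω·ν = g}` of the area integral, with inverse
`(ν, ω) ↦ (ν, ν × ω)`. -/
theorem stmt8 (A₁ A₂ A₃ g : ℝ) (hA₁ : 0 < A₁) (hA₂ : 0 < A₂) (hA₃ : 0 < A₃) :
    let Amul : (Fin 3 → ℝ) → (Fin 3 → ℝ) := fun v => ![A₁ * v 0, A₂ * v 1, A₃ * v 2]
    let T : Set ((Fin 3 → ℝ) × (Fin 3 → ℝ)) :=
      {p | p.1 0 ^ 2 + p.1 1 ^ 2 + p.1 2 ^ 2 = 1 ∧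
           p.1 0 * p.2 0 + p.1 1 * p.2 1 + p.1 2 * p.2 2 = 0}
    let Gg : Set ((Fin 3 → ℝ) × (Fin 3 → ℝ)) :=
      {p | p.1 0 ^ 2 + p.1 1 ^ 2 + p.1 2 ^ 2 = 1 ∧
           A₁ * p.2 0 * p.1 0 + A₂ * p.2 1 * p.1 1 + A₃ * p.2 2 * p.1 2 = g}
    let Φ : (Fin 3 → ℝ) × (Fin 3 → ℝ) → (Fin 3 → ℝ) × (Fin 3 → ℝ) :=
      fun p => (p.1, (A₁ * p.1 0 ^ 2 + A₂ * p.1 1 ^ 2 + A₃ * p.1 2 ^ 2)⁻¹ •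
        (crossProduct p.2 (Amul p.1) + g • p.1))
    let Ψ : (Fin 3 → ℝ) × (Fin 3 → ℝ) → (Fin 3 → ℝ) × (Fin 3 → ℝ) :=
      fun p => (p.1, crossProduct p.1 p.2)
    Set.BijOn Φ T Gg ∧ Set.InvOn Ψ Φ T Gg := by
  intro Amul T Gg Φ Ψ
  have dotProduct_Amul (ν ω : Fin 3 → ℝ) :
      ω ⬝ᵥ Amul ν = A₁ * ω 0 * ν 0 + A₂ * ω 1 * ν 1 + A₃ * ω 2 * ν 2 := by
    simp only [Amul, vec3_dotProduct, cons_val_zero, cons_val_one, cons_val_two, tail_cons,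
      head_cons]
    ring
  have dotProduct_Amul_self (ν : Fin 3 → ℝ) :
      ν ⬝ᵥ Amul ν = A₁ * ν 0 ^ 2 + A₂ * ν 1 ^ 2 + A₃ * ν 2 ^ 2 := by
    rw [dotProduct_Amul]
    ring
  have hΦ (p) : Φ p = (p.1, kolosov (Amul p.1) g p.1 p.2) := by
    rw [kolosov, dotProduct_Amul_self]
  have hden {ν : Fin 3 → ℝ} (hν : ν 0 ^ 2 + ν 1 ^ 2 + ν 2 ^ 2 = 1) : ν ⬝ᵥ Amul ν ≠ 0 := by
    rw [dotProduct_Amul_self]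
    exact (weighted_sum_sq_pos hA₁ hA₂ hA₃ hν).ne'
  have hinv : Set.InvOn Ψ Φ T Gg := by
    constructor
    · rintro ⟨ν, ξ⟩ ⟨hν, hξ⟩
      rw [hΦ]
      exact Prod.ext rfl (cross_kolosov g (hden hν) (by rwa [vec3_dotProduct]))
    · rintro ⟨ν, ω⟩ ⟨hν, hω⟩
      rw [hΦ]
      exact Prod.ext rfl (kolosov_cross g (hden hν) (by rwa [dotProduct_Amul]))
  refine ⟨hinv.bijOn ?_ ?_, hinv⟩
  · rintro ⟨ν, ξ⟩ ⟨hν, -⟩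
    rw [hΦ]
    exact ⟨hν, by rw [← dotProduct_Amul, kolosov_dotProduct g (hden hν)]⟩
  · rintro ⟨ν, ω⟩ ⟨hν, -⟩
    exact ⟨hν, by rw [← vec3_dotProduct, dot_self_cross]⟩
end

section
/- For λ ∈ ℝ consider the quartic q(x) = (x + λ)(3x − λ)³ + 16. Then: (a) q has a real root if and only if λ² ≥ 4/3; (b) if λ² = 4/3 then x = −2λ/3 is the unique real root of q; (c) if λ² > 4/3 then q has exactly two distinct real roots; (d) if 4/3 < λ² < 4 then both real roots x satisfy x(x + λ) < 0; (e) if λ² = 4 then x = 0 is a root of q; (f) if λ² > 4 then exactly one of the two real roots satisfies x(x + λ) ≤ 0. -/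
/-!
Substituting `u = 3x + 2λ` gives `3 q(x) = 48 - 27 λ⁴ + u² ((u - 4λ)² + 2λ²)`. The quartic in `u` on
the right has derivative `4u (u - 3λ)²`, so it is strictly increasing for `u ≥ 0`, and by the
symmetry `q_λ(x) = q_{-λ}(-x)` strictly decreasing for `u ≤ 0`. Thus `q` is valley-shaped with
minimum `16 - 9λ⁴` at `x = -2λ/3`, and every assertion follows from the intermediate value theorem
and a comparison with the values `q(0) = 16 - λ⁴` and `q(-λ) = q(λ/3) = 16`.
-/

open Set

section Valley

variable {f : ℝ → ℝ} {m : ℝ}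

lemma eq_or_eq_of_valley (hanti : StrictAntiOn f (Iic m)) (hmono : StrictMonoOn f (Ici m))
    {x y z : ℝ} (hx : x ≤ m) (hy : m ≤ y) (hzx : f z = f x) (hzy : f z = f y) : z = x ∨ z = y := by
  rcases le_total z m with hz | hz
  · exact Or.inl (hanti.injOn hz hx hzx)
  · exact Or.inr (hmono.injOn hz hy hzy)

lemma sub_mul_sub_nonpos_of_valley (hanti : StrictAntiOn f (Iic m))
    (hmono : StrictMonoOn f (Ici m)) {x y : ℝ} (hxy : f x = f y) (hne : x ≠ y) :
    (x - m) * (y - m) ≤ 0 := by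
  by_contra! h
  rcases pos_and_pos_or_neg_and_neg_of_mul_pos h with ⟨hx, hy⟩ | ⟨hx, hy⟩
  · exact hne (hmono.injOn (show m ≤ x by linarith) (show m ≤ y by linarith) hxy)
  · exact hne (hanti.injOn (show x ≤ m by linarith) (show y ≤ m by linarith) hxy)

lemma sub_mul_sub_neg_of_valley (hanti : StrictAntiOn f (Iic m))
    (hmono : StrictMonoOn f (Ici m)) {a b x : ℝ} (hm : (m - a) * (m - b) ≤ 0)
    (ha : f x < f a) (hb : f x < f b) : (x - a) * (x - b) < 0 := by
  wlog hab : a ≤ b generalizing a b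
  · have := this (by linarith) hb ha (le_of_not_ge hab)
    linarith
  have ham : a ≤ m := by nlinarith
  have hmb : m ≤ b := by nlinarith
  have hax : a < x := by
    by_contra! hxa
    exact (hanti.antitoneOn (show x ≤ m by linarith) ham hxa).not_gt ha
  have hxb : x < b := by
    by_contra! hbx
    exact (hmono.monotoneOn hmb (show m ≤ x by linarith) hbx).not_gt hb
  exact mul_neg_of_pos_of_neg (by linarith) (by linarith)

end Valley

lemma strictMonoOn_sq_mul_sq_sub_add (l : ℝ) :
    StrictMonoOn (fun u : ℝ => u ^ 2 * ((u - 4 * l) ^ 2 + 2 * l ^ 2)) (Ici 0) := by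
  intro a (ha : 0 ≤ a) b (hb : 0 ≤ b) hab
  have hba : 0 < (a - b) ^ 2 := by nlinarith
  have hpos : 0 < (b - a) * ((18 * (a + b) * l - 4 * (a ^ 2 + a * b + b ^ 2)) ^ 2
      + 2 * (a - b) ^ 2 * (a ^ 2 + 4 * a * b + b ^ 2)) := by
    apply mul_pos (by linarith)
    nlinarith [sq_nonneg (18 * (a + b) * l - 4 * (a ^ 2 + a * b + b ^ 2)), mul_nonneg ha hb]
  beta_reduce
  -- `hpos` is `18 (a + b)` times the increment, by a polynomial identity
  exact sub_pos.mp (pos_of_mul_pos_right (a := 18 * (a + b)) (by linarith) (by linarith))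

def gyrostatQuartic (l x : ℝ) : ℝ := (x + l) * (3 * x - l) ^ 3 + 16

namespace gyrostatQuartic

variable (l : ℝ)

lemma eq_add_sq_mul (x : ℝ) : gyrostatQuartic l x =
    16 - 9 * l ^ 4 + (3 * x + 2 * l) ^ 2 * ((3 * x + 2 * l - 4 * l) ^ 2 + 2 * l ^ 2) / 3 := by
  unfold gyrostatQuartic; ring

lemma neg_apply_neg (x : ℝ) : gyrostatQuartic (-l) (-x) = gyrostatQuartic l x := by
  unfold gyrostatQuartic; ring

lemma apply_vertex : gyrostatQuartic l (-(2 * l) / 3) = 16 - 9 * l ^ 4 := by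
  unfold gyrostatQuartic; ring

lemma apply_zero : gyrostatQuartic l 0 = 16 - l ^ 4 := by
  unfold gyrostatQuartic; ring

lemma apply_neg_self : gyrostatQuartic l (-l) = 16 := by
  unfold gyrostatQuartic; ring

lemma apply_div_three : gyrostatQuartic l (l / 3) = 16 := by
  unfold gyrostatQuartic; ring

lemma continuous : Continuous (gyrostatQuartic l) := by
  unfold gyrostatQuartic; fun_prop

lemma vertex_le (x : ℝ) : gyrostatQuartic l (-(2 * l) / 3) ≤ gyrostatQuartic l x := by
  rw [apply_vertex, eq_add_sq_mul]
  have : 0 ≤ (3 * x + 2 * l) ^ 2 * ((3 * x + 2 * l - 4 * l) ^ 2 + 2 * l ^ 2) := by positivity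
  linarith

lemma strictMonoOn : StrictMonoOn (gyrostatQuartic l) (Ici (-(2 * l) / 3)) := by
  intro a (ha : _ ≤ a) b (hb : _ ≤ b) hab
  have := strictMonoOn_sq_mul_sq_sub_add l (show 0 ≤ 3 * a + 2 * l by linarith)
    (show 0 ≤ 3 * b + 2 * l by linarith) (show 3 * a + 2 * l < 3 * b + 2 * l by linarith)
  rw [eq_add_sq_mul, eq_add_sq_mul]
  linarith

lemma strictAntiOn : StrictAntiOn (gyrostatQuartic l) (Iic (-(2 * l) / 3)) := by
  intro a (ha : a ≤ _) b (hb : b ≤ _) hab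
  rw [← neg_apply_neg l a, ← neg_apply_neg l b]
  exact strictMonoOn (-l) (show _ ≤ -b by linarith) (show _ ≤ -a by linarith) (neg_lt_neg hab)

lemma vertex_nonpos_iff : gyrostatQuartic l (-(2 * l) / 3) ≤ 0 ↔ 4 / 3 ≤ l ^ 2 := by
  rw [apply_vertex]
  constructor <;> intro h <;> nlinarith [sq_nonneg l]

lemma vertex_neg_iff : gyrostatQuartic l (-(2 * l) / 3) < 0 ↔ 4 / 3 < l ^ 2 := by
  rw [apply_vertex]
  constructor <;> intro h <;> nlinarith [sq_nonneg l]

variable {l}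

lemma exists_ge_vertex_eq_zero (h : gyrostatQuartic l (-(2 * l) / 3) ≤ 0) :
    ∃ x, -(2 * l) / 3 ≤ x ∧ gyrostatQuartic l x = 0 := by
  obtain ⟨b, hb, hb16⟩ : ∃ b, -(2 * l) / 3 ≤ b ∧ gyrostatQuartic l b = 16 := by
    rcases le_total l 0 with hl | hl
    · exact ⟨-l, by linarith, apply_neg_self l⟩
    · exact ⟨l / 3, by linarith, apply_div_three l⟩
  obtain ⟨x, hx, hx0⟩ :=
    intermediate_value_Icc hb (continuous l).continuousOn ⟨h, by rw [hb16]; norm_num⟩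
  exact ⟨x, hx.1, hx0⟩

lemma exists_le_vertex_eq_zero (h : gyrostatQuartic l (-(2 * l) / 3) ≤ 0) :
    ∃ x, x ≤ -(2 * l) / 3 ∧ gyrostatQuartic l x = 0 := by
  have hvertex : -(2 * -l) / 3 = -(-(2 * l) / 3) := by ring
  obtain ⟨x, hx, hx0⟩ := exists_ge_vertex_eq_zero (l := -l) (by rwa [hvertex, neg_apply_neg])
  exact ⟨-x, by linarith, by rwa [← neg_apply_neg, neg_neg]⟩

theorem exists_eq_zero_iff : (∃ x, gyrostatQuartic l x = 0) ↔ 4 / 3 ≤ l ^ 2 := by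
  rw [← vertex_nonpos_iff]
  constructor
  · rintro ⟨x, hx⟩
    exact hx ▸ vertex_le l x
  · intro h
    obtain ⟨x, -, hx⟩ := exists_ge_vertex_eq_zero h
    exact ⟨x, hx⟩

theorem eq_zero_iff_of_sq_eq (h : l ^ 2 = 4 / 3) (x : ℝ) :
    gyrostatQuartic l x = 0 ↔ x = -(2 * l) / 3 := by
  have hvertex : gyrostatQuartic l (-(2 * l) / 3) = 0 := by
    rw [apply_vertex, show l ^ 4 = (l ^ 2) ^ 2 by ring, h]; norm_num
  constructor
  · intro hx
    have hx' := hx.trans hvertex.symm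
    exact (eq_or_eq_of_valley (strictAntiOn l) (strictMonoOn l) le_rfl le_rfl hx' hx').elim id id
  · rintro rfl
    exact hvertex

theorem exists_two_roots (h : 4 / 3 < l ^ 2) : ∃ x y : ℝ, x ≠ y ∧ gyrostatQuartic l x = 0 ∧
    gyrostatQuartic l y = 0 ∧ ∀ z, gyrostatQuartic l z = 0 → z = x ∨ z = y := by
  have hvertex := (vertex_neg_iff l).2 h
  obtain ⟨x, hx, hx0⟩ := exists_le_vertex_eq_zero hvertex.le
  obtain ⟨y, hy, hy0⟩ := exists_ge_vertex_eq_zero hvertex.le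
  refine ⟨x, y, ?_, hx0, hy0, fun z hz => eq_or_eq_of_valley (strictAntiOn l) (strictMonoOn l)
    hx hy (hz.trans hx0.symm) (hz.trans hy0.symm)⟩
  rintro rfl
  rw [le_antisymm hx hy] at hx0
  linarith

theorem mul_add_neg_of_eq_zero (h : l ^ 2 < 4) {x : ℝ} (hx : gyrostatQuartic l x = 0) :
    x * (x + l) < 0 := by
  have hbetween := sub_mul_sub_neg_of_valley (strictAntiOn l) (strictMonoOn l) (a := 0) (b := -l)
    (by nlinarith [sq_nonneg l])
    (by rw [hx, apply_zero]; nlinarith [sq_nonneg l])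
    (by rw [hx, apply_neg_self]; norm_num)
  linarith

theorem existsUnique_eq_zero_mul_add_nonpos (h : 4 < l ^ 2) :
    ∃! x, gyrostatQuartic l x = 0 ∧ x * (x + l) ≤ 0 := by
  have hzero : gyrostatQuartic l 0 < 0 := by
    rw [apply_zero]; nlinarith
  obtain ⟨x, hxmem, hx0⟩ := intermediate_value_uIcc (continuous l).continuousOn
    (mem_uIcc.2 (Or.inl ⟨hzero.le, by rw [apply_neg_self]; norm_num⟩) :
      (0 : ℝ) ∈ uIcc (gyrostatQuartic l 0) (gyrostatQuartic l (-l)))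
  have hx : x * (x + l) ≤ 0 := by
    rcases mem_uIcc.1 hxmem with ⟨h1, h2⟩ | ⟨h1, h2⟩ <;> nlinarith
  refine ⟨x, ⟨hx0, hx⟩, ?_⟩
  rintro y ⟨hy0, hy⟩
  by_contra hne
  have hsides :=
    sub_mul_sub_nonpos_of_valley (strictAntiOn l) (strictMonoOn l) (hy0.trans hx0.symm) hne
  -- `0` would lie strictly between the two roots, which both lie between `0` and `-λ`
  have hbetween := sub_mul_sub_neg_of_valley (strictAntiOn l) (strictMonoOn l) (a := y) (b := x)
    (x := 0) (by linarith) (by rwa [hy0]) (by rwa [hx0])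
  rcases lt_or_ge x 0 with hneg | hnonneg
  · have : 0 < y := by nlinarith
    nlinarith
  · have : y < 0 := by nlinarith
    nlinarith

end gyrostatQuartic

/-- Root analysis of the quartic `q(x) = (x + λ)(3x − λ)³ + 16` determining the
uniform rotations of the Chaplygin–Sretensky gyrostat. -/
theorem stmt9 (l : ℝ) :
    let q : ℝ → ℝ := fun x => (x + l) * (3*x - l)^3 + 16
    ((∃ x : ℝ, q x = 0) ↔ 4/3 ≤ l^2) ∧
    (l^2 = 4/3 → ∀ x : ℝ, q x = 0 ↔ x = -(2*l)/3) ∧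
    (4/3 < l^2 → ∃ x y : ℝ, x ≠ y ∧ q x = 0 ∧ q y = 0 ∧
      ∀ z : ℝ, q z = 0 → z = x ∨ z = y) ∧
    (4/3 < l^2 → l^2 < 4 → ∀ x : ℝ, q x = 0 → x * (x + l) < 0) ∧
    (l^2 = 4 → q 0 = 0) ∧
    (4 < l^2 → ∃! x : ℝ, q x = 0 ∧ x * (x + l) ≤ 0) := by
  intro q
  exact ⟨gyrostatQuartic.exists_eq_zero_iff,
    gyrostatQuartic.eq_zero_iff_of_sq_eq,
    gyrostatQuartic.exists_two_roots,
    fun _ h _ => gyrostatQuartic.mul_add_neg_of_eq_zero h,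
    fun h => (gyrostatQuartic.apply_zero l).trans (by linear_combination (-l ^ 2 - 4) * h),
    gyrostatQuartic.existsUnique_eq_zero_mul_add_nonpos⟩
end

section
/- Fix λ ∈ ℝ. Let (ω, ν) ∈ ℝ³ × ℝ³ satisfy ν₁² + ν₂² + ν₃² = 1 and 4(ω₁ν₁ + ω₂ν₂) + (ω₃ + λ)ν₃ = 0. Then (ω, ν) is an equilibrium of the Chaplygin–Sretensky system (i.e., the right-hand sides of all six equations vanish at (ω, ν)) if and only if one of the following holds: (A) ω = 0, ν₂ = ν₃ = 0 and ν₁ = ±1; or (B) ω₂ = 0, ν₂ = 0, (3ω₃ − λ)ω₁ + ν₃ = 0, ν₁ = (1/4)(3ω₃ − λ)(ω₃ + λ), 4ν₃² = −ω₃(ω₃ + λ)(3ω₃ − λ)², and (ω₃ + λ)(3ω₃ − λ)³ + 16 = 0. -/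
/-!
In the paper's 1-based indices (`ω 0` is `ω₁`): at an equilibrium `ν₂ = 0`, and `ω₂ = 0` since
otherwise the equations for `ν₁'` and `ν₃'` force `ν = 0`, against `Γ = 1`. The equations then reduce to
`ν₃ = (λ - 3ω₃)ω₁` and `ν₃ω₁ = ν₁ω₃`. If `ν₃ = 0` the body is at rest. Otherwise `ω₃ G = 0`
becomes `ν₃ (4ω₁² + ω₃(ω₃ + λ)) = 0`, and the relation `4ω₁² = -ω₃(ω₃ + λ)` expresses `ν₁`, `ν₃²`
and finally `Γ = 1` through `ω₃` alone.
-/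

namespace ChaplyginSretensky

variable (l : ℝ) (ω ν : Fin 3 → ℝ)

/-- The right-hand sides of the Chaplygin–Sretensky system vanish at `(ω, ν)`. -/
def IsEquilibrium : Prop :=
  3 * ω 1 * ω 2 - l * ω 1 = 0 ∧
  -(3 * ω 2 * ω 0) + l * ω 0 - ν 2 = 0 ∧
  ν 1 = 0 ∧
  ν 1 * ω 2 - ν 2 * ω 1 = 0 ∧
  ν 2 * ω 0 - ν 0 * ω 2 = 0 ∧
  ν 0 * ω 1 - ν 1 * ω 0 = 0

def IsRestPosition : Prop :=
  ω 0 = 0 ∧ ω 1 = 0 ∧ ω 2 = 0 ∧ ν 1 = 0 ∧ ν 2 = 0 ∧ (ν 0 = 1 ∨ ν 0 = -1)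

def IsUniformRotation : Prop :=
  ω 1 = 0 ∧ ν 1 = 0 ∧
  (3 * ω 2 - l) * ω 0 + ν 2 = 0 ∧
  ν 0 = (1/4) * (3 * ω 2 - l) * (ω 2 + l) ∧
  4 * ν 2 ^ 2 = -(ω 2 * (ω 2 + l) * (3 * ω 2 - l)^2) ∧
  (ω 2 + l) * (3 * ω 2 - l)^3 + 16 = 0

variable {l ω ν}

theorem IsRestPosition.isEquilibrium (h : IsRestPosition ω ν) : IsEquilibrium l ω ν := by
  obtain ⟨hω₀, hω₁, hω₂, hν₁, hν₂, -⟩ := h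
  simp [IsEquilibrium, hω₀, hω₁, hω₂, hν₁, hν₂]

theorem IsUniformRotation.isEquilibrium (h : IsUniformRotation l ω ν) : IsEquilibrium l ω ν := by
  obtain ⟨hω₁, hν₁, hν₂, hν₀, hν₂_sq, hcubic⟩ := h
  have hk : (3 * ω 2 - l) ^ 2 ≠ 0 := by
    refine pow_ne_zero 2 fun hk => ?_
    simp [hk] at hcubic
  -- substitute `ν 2 = -(3 ω 2 - l) ω 0` into the formula for `ν 2 ^ 2`
  have hrel : 4 * ω 0 ^ 2 + ω 2 * (ω 2 + l) = 0 := by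
    refine (mul_eq_zero.mp ?_).resolve_left hk
    linear_combination hν₂_sq - 4 * (ν 2 - (3 * ω 2 - l) * ω 0) * hν₂
  refine ⟨?_, ?_, hν₁, ?_, ?_, ?_⟩
  · linear_combination (3 * ω 2 - l) * hω₁
  · linear_combination -hν₂
  · linear_combination ω 2 * hν₁ - ν 2 * hω₁
  · linear_combination ω 0 * hν₂ - ω 2 * hν₀ - ((3 * ω 2 - l) / 4) * hrel
  · linear_combination ν 0 * hω₁ - ω 0 * hν₁

namespace IsEquilibrium

variable (hΓ : ν 0 ^ 2 + ν 1 ^ 2 + ν 2 ^ 2 = 1) (h : IsEquilibrium l ω ν)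
include hΓ h

theorem omega_one_eq_zero : ω 1 = 0 := by
  obtain ⟨h₁, -, hν₁, h₄, -, h₆⟩ := h
  by_contra hω₁
  have hν₂ : ν 2 = 0 :=
    (mul_eq_zero.mp (by linear_combination -h₄ + ω 2 * hν₁ : ν 2 * ω 1 = 0)).resolve_right hω₁
  have hν₀ : ν 0 = 0 :=
    (mul_eq_zero.mp (by linear_combination h₆ + ω 0 * hν₁ : ν 0 * ω 1 = 0)).resolve_right hω₁
  simp [hν₀, hν₁, hν₂] at hΓ

variable (hG : 4 * (ω 0 * ν 0 + ω 1 * ν 1) + (ω 2 + l) * ν 2 = 0)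
include hG

theorem isRestPosition_of_nu_two_eq_zero (hν₂ : ν 2 = 0) : IsRestPosition ω ν := by
  have hω₁ := h.omega_one_eq_zero hΓ
  obtain ⟨-, -, hν₁, -, h₅, -⟩ := h
  have hν₀_sq : ν 0 * ν 0 = 1 := by linear_combination hΓ - ν 1 * hν₁ - ν 2 * hν₂
  have hν₀ : ν 0 ≠ 0 := left_ne_zero_of_mul_eq_one hν₀_sq
  have hω₂ : ω 2 = 0 :=
    (mul_eq_zero.mp (by linear_combination -h₅ + ω 0 * hν₂ : ν 0 * ω 2 = 0)).resolve_left hν₀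
  have hω₀ : ω 0 = 0 := by
    refine (mul_eq_zero.mp ?_).resolve_right hν₀
    linear_combination hG / 4 - ω 1 * hν₁ - (ω 2 + l) / 4 * hν₂
  exact ⟨hω₀, hω₁, hω₂, hν₁, hν₂, mul_self_eq_one_iff.mp hν₀_sq⟩

theorem isUniformRotation_of_nu_two_ne_zero (hν₂ : ν 2 ≠ 0) : IsUniformRotation l ω ν := by
  have hω₁ := h.omega_one_eq_zero hΓ
  obtain ⟨-, h₂, hν₁, -, h₅, -⟩ := h
  -- `ω 2 * G = 0`, rewritten with `ν 2 * ω 0 = ν 0 * ω 2`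
  have hrel : 4 * ω 0 ^ 2 + ω 2 * (ω 2 + l) = 0 := by
    refine (mul_eq_zero.mp ?_).resolve_left hν₂
    linear_combination ω 2 * hG + 4 * ω 0 * h₅ - 4 * ω 2 * ω 1 * hν₁
  have hω₂ : ω 2 ≠ 0 := by
    intro hω₂
    have hω₀ : ω 0 = 0 := by simpa [hω₂] using hrel
    exact hν₂ (by linear_combination -h₂ + (l - 3 * ω 2) * hω₀)
  have hν₀ : ν 0 = 1/4 * (3 * ω 2 - l) * (ω 2 + l) := by
    refine sub_eq_zero.mp ((mul_eq_zero.mp ?_).resolve_right hω₂)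
    linear_combination -h₅ - ω 0 * h₂ - ((3 * ω 2 - l) / 4) * hrel
  have hν₂' : ν 2 = (l - 3 * ω 2) * ω 0 := by linear_combination -h₂
  refine ⟨hω₁, hν₁, by linear_combination -h₂, hν₀, ?_, ?_⟩
  · rw [hν₂']
    linear_combination (3 * ω 2 - l) ^ 2 * hrel
  · rw [hν₀, hν₂', hν₁] at hΓ
    linear_combination -16 * hΓ + 4 * (3 * ω 2 - l) ^ 2 * hrel

end IsEquilibrium

theorem isEquilibrium_iff (hΓ : ν 0 ^ 2 + ν 1 ^ 2 + ν 2 ^ 2 = 1)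
    (hG : 4 * (ω 0 * ν 0 + ω 1 * ν 1) + (ω 2 + l) * ν 2 = 0) :
    IsEquilibrium l ω ν ↔ IsRestPosition ω ν ∨ IsUniformRotation l ω ν := by
  refine ⟨fun h => ?_, ?_⟩
  · by_cases hν₂ : ν 2 = 0
    · exact .inl (h.isRestPosition_of_nu_two_eq_zero hΓ hG hν₂)
    · exact .inr (h.isUniformRotation_of_nu_two_ne_zero hΓ hG hν₂)
  · rintro (h | h)
    exacts [h.isEquilibrium, h.isEquilibrium]

end ChaplyginSretensky

open ChaplyginSretensky in
/-- Classification of the equilibria of the Chaplygin–Sretensky system on the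
level `{Γ = 1, G = 0}`: a point is an equilibrium iff it is one of the two
equilibrium positions of the body (A), or a uniform rotation (B). -/
theorem stmt10 (l : ℝ) (ω ν : Fin 3 → ℝ)
    (hunit : ν 0 ^ 2 + ν 1 ^ 2 + ν 2 ^ 2 = 1)
    (hG : 4 * (ω 0 * ν 0 + ω 1 * ν 1) + (ω 2 + l) * ν 2 = 0) :
    (3 * ω 1 * ω 2 - l * ω 1 = 0 ∧
     -(3 * ω 2 * ω 0) + l * ω 0 - ν 2 = 0 ∧
     ν 1 = 0 ∧
     ν 1 * ω 2 - ν 2 * ω 1 = 0 ∧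
     ν 2 * ω 0 - ν 0 * ω 2 = 0 ∧
     ν 0 * ω 1 - ν 1 * ω 0 = 0) ↔
    ((ω 0 = 0 ∧ ω 1 = 0 ∧ ω 2 = 0 ∧ ν 1 = 0 ∧ ν 2 = 0 ∧ (ν 0 = 1 ∨ ν 0 = -1)) ∨
     (ω 1 = 0 ∧ ν 1 = 0 ∧
      (3 * ω 2 - l) * ω 0 + ν 2 = 0 ∧
      ν 0 = (1/4) * (3 * ω 2 - l) * (ω 2 + l) ∧
      4 * ν 2 ^ 2 = -(ω 2 * (ω 2 + l) * (3 * ω 2 - l)^2) ∧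
      (ω 2 + l) * (3 * ω 2 - l)^3 + 16 = 0)) :=
  isEquilibrium_iff hunit hG
end

section
/- Fix λ ∈ ℝ. Define two parametrized curves in ℝ² by Bif(σ) = ((3/2)σ² − 2λσ + λ²/2 − 1, −σ³ + λσ²) and Bif*(σ*) = ((3/2)σ*² − 2λσ* + λ²/2 + 1, −σ*³ + λσ*²) for σ, σ* ∈ ℝ. Then the images of Bif and Bif* intersect (i.e., there exist σ, σ* ∈ ℝ with Bif(σ) = Bif*(σ*)) if and only if λ² ≥ 4/3; moreover, at every common point, the number τ = σ + σ* − λ satisfies (τ + λ)(3τ − λ)³ + 16 = 0, and the common value equals ((λ² − 4λτ − 3τ²)/4, τ²(τ + λ)). -/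
/-!
In the coordinates `s = σ + σ*`, `d = σ - σ*` the two equations `Bif σ = Bif* σ*` read
`d (3s - 4λ) = 4` and (after cancelling `d ≠ 0` from the difference of the cubics)
`d² = s (4λ - 3s)`. Writing `s = τ + λ` and eliminating `d` gives the quartic
`(τ + λ)(3τ - λ)³ + 16 = 0`; conversely each root `τ` gives `d = 4 / (3τ - λ)` and so a
common point. With `u = 3τ - λ`,
`3 (τ + λ)(3τ - λ)³ = u⁴ + 4λu³ = (u + 3λ)² ((u - λ)² + 2λ²) - 27λ⁴`,
so the quartic has minimum `16 - 9λ⁴`, attained at `τ = -2λ/3`, and a real root iff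
`λ² ≥ 4/3`.
-/

namespace ChaplyginSretensky

variable (l : ℝ)

noncomputable def bifCurve (σ : ℝ) : ℝ × ℝ :=
  ((3/2) * σ^2 - 2*l*σ + l^2/2 - 1, -σ^3 + l*σ^2)

noncomputable def bifStarCurve (σ : ℝ) : ℝ × ℝ :=
  ((3/2) * σ^2 - 2*l*σ + l^2/2 + 1, -σ^3 + l*σ^2)

variable {l}

theorem bifCurve_eq_bifStarCurve_iff {σ σs : ℝ} :
    bifCurve l σ = bifStarCurve l σs ↔
      (σ - σs) * (3*(σ + σs) - 4*l) = 4 ∧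
        (σ - σs)^2 = (σ + σs) * (4*l - 3*(σ + σs)) := by
  simp only [bifCurve, bifStarCurve, Prod.mk.injEq]
  constructor
  · rintro ⟨hh, hk⟩
    have hne : σ - σs ≠ 0 := by
      intro h
      rw [sub_eq_zero.mp h] at hh
      linarith
    refine ⟨by linear_combination 2 * hh, mul_left_cancel₀ hne ?_⟩
    linear_combination -4 * hk
  · rintro ⟨hh, hk⟩
    exact ⟨by linear_combination hh / 2, by linear_combination (σs - σ) / 4 * hk⟩

theorem quartic_eq_zero_of_bifCurve_eq_bifStarCurve {σ σs : ℝ}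
    (h : bifCurve l σ = bifStarCurve l σs) :
    ((σ + σs - l) + l) * (3*(σ + σs - l) - l)^3 + 16 = 0 := by
  obtain ⟨hh, hk⟩ := bifCurve_eq_bifStarCurve_iff.mp h
  linear_combination (3*(σ + σs) - 4*l)^2 * hk - ((σ - σs) * (3*(σ + σs) - 4*l) + 4) * hh

theorem bifCurve_eq_of_bifCurve_eq_bifStarCurve {σ σs : ℝ}
    (h : bifCurve l σ = bifStarCurve l σs) :
    bifCurve l σ = ((l^2 - 4*l*(σ + σs - l) - 3*(σ + σs - l)^2)/4,
      (σ + σs - l)^2 * ((σ + σs - l) + l)) := by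
  obtain ⟨hh, hk⟩ := bifCurve_eq_bifStarCurve_iff.mp h
  simp only [bifCurve, Prod.mk.injEq]
  exact ⟨by linear_combination hh / 4 + 3/8 * hk,
    by linear_combination (l - 2*σ - σs) / 4 * hk⟩

theorem exists_bifCurve_eq_bifStarCurve_of_quartic_eq_zero {τ : ℝ}
    (hτ : (τ + l) * (3*τ - l)^3 + 16 = 0) :
    ∃ σ σs : ℝ, bifCurve l σ = bifStarCurve l σs := by
  have hu : 3*τ - l ≠ 0 := by
    rintro hu
    rw [hu] at hτ
    norm_num at hτ
  set d := 4 / (3*τ - l)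
  have hd : d * (3*τ - l) = 4 := div_mul_cancel₀ 4 hu
  have hd2 : d^2 = -(τ + l) * (3*τ - l) := by
    refine mul_right_cancel₀ (pow_ne_zero 2 hu) ?_
    linear_combination (d * (3*τ - l) + 4) * hd + hτ
  refine ⟨(τ + l + d) / 2, (τ + l - d) / 2, bifCurve_eq_bifStarCurve_iff.mpr ⟨?_, ?_⟩⟩
  · linear_combination hd
  · linear_combination hd2

theorem quartic_lower_bound (τ : ℝ) : 16 - 9*l^4 ≤ (τ + l) * (3*τ - l)^3 + 16 := by
  have key : 3 * ((τ + l) * (3*τ - l)^3) + 27*l^4 =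
      (3*τ + 2*l)^2 * ((3*τ - 2*l)^2 + 2*l^2) := by ring
  have : 0 ≤ (3*τ + 2*l)^2 * ((3*τ - 2*l)^2 + 2*l^2) := by positivity
  linarith

theorem exists_quartic_eq_zero_iff :
    (∃ τ : ℝ, (τ + l) * (3*τ - l)^3 + 16 = 0) ↔ 4/3 ≤ l^2 := by
  constructor
  · rintro ⟨τ, hτ⟩
    have h := quartic_lower_bound (l := l) τ
    nlinarith [sq_nonneg l]
  · intro hl
    have hle : -2*l/3 ≤ |l| + 1 := by linarith [neg_abs_le l, abs_nonneg l]
    have hcont : ContinuousOn (fun τ : ℝ => (τ + l) * (3*τ - l)^3 + 16)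
        (Set.Icc (-2*l/3) (|l| + 1)) := by fun_prop
    have hmin : (-2*l/3 + l) * (3*(-2*l/3) - l)^3 + 16 ≤ 0 := by
      nlinarith [sq_nonneg (l^2 - 4/3)]
    have hpos : 0 ≤ (|l| + 1 + l) * (3*(|l| + 1) - l)^3 + 16 := by
      have h1 : 0 ≤ |l| + 1 + l := by linarith [neg_abs_le l]
      have h2 : 0 ≤ 3*(|l| + 1) - l := by linarith [le_abs_self l, abs_nonneg l]
      positivity
    obtain ⟨τ, -, hτ⟩ := intermediate_value_Icc hle hcont ⟨hmin, hpos⟩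
    exact ⟨τ, hτ⟩

end ChaplyginSretensky

open ChaplyginSretensky in
/-- The bifurcation curves `Bif` and `Bif*` of the Chaplygin–Sretensky problem
intersect iff `λ² ≥ 4/3`, and every common point corresponds to a uniform
rotation: `τ = σ + σ* − λ` satisfies `(τ + λ)(3τ − λ)³ + 16 = 0` and the common
point equals `((λ² − 4λτ − 3τ²)/4, τ²(τ + λ))`. -/
theorem stmt11 (l : ℝ) :
    let Bif : ℝ → ℝ × ℝ := fun σ =>
      ((3/2) * σ^2 - 2*l*σ + l^2/2 - 1, -σ^3 + l*σ^2)
    let Bifs : ℝ → ℝ × ℝ := fun σ =>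
      ((3/2) * σ^2 - 2*l*σ + l^2/2 + 1, -σ^3 + l*σ^2)
    ((∃ σ σs : ℝ, Bif σ = Bifs σs) ↔ 4/3 ≤ l^2) ∧
    (∀ σ σs : ℝ, Bif σ = Bifs σs →
      ((σ + σs - l) + l) * (3*(σ + σs - l) - l)^3 + 16 = 0 ∧
      Bif σ = ((l^2 - 4*l*(σ + σs - l) - 3*(σ + σs - l)^2)/4,
               (σ + σs - l)^2 * ((σ + σs - l) + l))) := by
  show ((∃ σ σs, bifCurve l σ = bifStarCurve l σs) ↔ 4/3 ≤ l^2) ∧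
    ∀ σ σs, bifCurve l σ = bifStarCurve l σs → _ ∧ bifCurve l σ = _
  refine ⟨⟨?_, fun hl => ?_⟩, fun σ σs h =>
      ⟨quartic_eq_zero_of_bifCurve_eq_bifStarCurve h,
        bifCurve_eq_of_bifCurve_eq_bifStarCurve h⟩⟩
  · rintro ⟨σ, σs, h⟩
    exact exists_quartic_eq_zero_iff.mp ⟨_, quartic_eq_zero_of_bifCurve_eq_bifStarCurve h⟩
  · obtain ⟨τ, hτ⟩ := exists_quartic_eq_zero_iff.mpr hl
    exact exists_bifCurve_eq_bifStarCurve_of_quartic_eq_zero hτ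
end

section
/- Fix λ ∈ ℝ and let (ω, ν) : ℝ → ℝ³ × ℝ³ be any differentiable solution of the Chaplygin–Sretensky system. Then: (a) the function G = 4(ω₁ν₁ + ω₂ν₂) + (ω₃ + λ)ν₃ is constant along the solution; (b) the derivative along the solution of the Sretensky function K = 2(ω₃ − λ)(ω₁² + ω₂²) + 2ω₁ν₃ satisfies dK/dt = (ω₂/2)·G at every time; in particular, if G vanishes at one time (hence at all times), then K is constant along the solution, i.e., K is a partial first integral on the level set G = 0. -/
/-!
Both claims are direct computations: differentiating `G` and `K` along the flow and
substituting the equations of motion, `dG/dt` vanishes identically and `dK/dt`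
collapses to `(ω₂/2)·G`. A function with zero derivative on `ℝ` is constant, so `G`
is constant, and on the level `G = 0` so is `K`.
-/

theorem is_const_of_hasDerivAt_zero {𝕜 E : Type*} [RCLike 𝕜] [NormedAddCommGroup E]
    [NormedSpace 𝕜 E] {f : 𝕜 → E} (hf : ∀ x, HasDerivAt f 0 x) (x y : 𝕜) : f x = f y :=
  is_const_of_deriv_eq_zero (fun x => (hf x).differentiableAt) (fun x => (hf x).deriv) x y

namespace ChaplyginSretensky

def areaIntegral (l : ℝ) (ω ν : ℝ → Fin 3 → ℝ) (t : ℝ) : ℝ :=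
  4 * (ω t 0 * ν t 0 + ω t 1 * ν t 1) + (ω t 2 + l) * ν t 2

def sretenskyFunction (l : ℝ) (ω ν : ℝ → Fin 3 → ℝ) (t : ℝ) : ℝ :=
  2 * (ω t 2 - l) * (ω t 0 ^ 2 + ω t 1 ^ 2) + 2 * ω t 0 * ν t 2

variable {l t : ℝ} {ω ν : ℝ → Fin 3 → ℝ} {ω' ν' : Fin 3 → ℝ}

theorem hasDerivAt_areaIntegral
    (hω : ∀ i, HasDerivAt (fun s => ω s i) (ω' i) t)
    (hν : ∀ i, HasDerivAt (fun s => ν s i) (ν' i) t)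
    (e1 : 4 * ω' 0 = 3 * ω t 1 * ω t 2 - l * ω t 1)
    (e2 : 4 * ω' 1 = -(3 * ω t 2 * ω t 0) + l * ω t 0 - ν t 2)
    (e3 : ω' 2 = ν t 1)
    (e4 : ν' 0 = ν t 1 * ω t 2 - ν t 2 * ω t 1)
    (e5 : ν' 1 = ν t 2 * ω t 0 - ν t 0 * ω t 2)
    (e6 : ν' 2 = ν t 0 * ω t 1 - ν t 1 * ω t 0) :
    HasDerivAt (areaIntegral l ω ν) 0 t := by
  have h := ((((hω 0).mul (hν 0)).add ((hω 1).mul (hν 1))).const_mul 4).add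
    (((hω 2).add_const l).mul (hν 2))
  refine h.congr_deriv ?_
  linear_combination ν t 0 * e1 + ν t 1 * e2 + ν t 2 * e3
    + 4 * ω t 0 * e4 + 4 * ω t 1 * e5 + (ω t 2 + l) * e6

theorem hasDerivAt_sretenskyFunction
    (hω : ∀ i, HasDerivAt (fun s => ω s i) (ω' i) t)
    (hν : HasDerivAt (fun s => ν s 2) (ν' 2) t)
    (e1 : 4 * ω' 0 = 3 * ω t 1 * ω t 2 - l * ω t 1)
    (e2 : 4 * ω' 1 = -(3 * ω t 2 * ω t 0) + l * ω t 0 - ν t 2)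
    (e3 : ω' 2 = ν t 1)
    (e6 : ν' 2 = ν t 0 * ω t 1 - ν t 1 * ω t 0) :
    HasDerivAt (sretenskyFunction l ω ν) (ω t 1 / 2 * areaIntegral l ω ν t) t := by
  have h := ((((hω 2).sub_const l).const_mul 2).mul
    (((hω 0).pow 2).add ((hω 1).pow 2))).add (((hω 0).const_mul 2).mul hν)
  refine h.congr_deriv ?_
  simp only [areaIntegral, Nat.cast_ofNat, Pi.add_apply, Pi.pow_apply]
  linear_combination ((ω t 2 - l) * ω t 0 + ν t 2 / 2) * e1
    + (ω t 2 - l) * ω t 1 * e2 + 2 * (ω t 0 ^ 2 + ω t 1 ^ 2) * e3 + 2 * ω t 0 * e6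

end ChaplyginSretensky

open ChaplyginSretensky in
/-- Along any solution of the Chaplygin–Sretensky system, the area integral `G`
is constant, the Sretensky function `K` satisfies `dK/dt = (ω₂/2)·G`, and hence
`K` is a partial first integral on the level `G = 0`. -/
theorem stmt12 (l : ℝ) (ω ν ω' ν' : ℝ → Fin 3 → ℝ)
    (hω : ∀ t i, HasDerivAt (fun s => ω s i) (ω' t i) t)
    (hν : ∀ t i, HasDerivAt (fun s => ν s i) (ν' t i) t)
    (e1 : ∀ t, 4 * ω' t 0 = 3 * ω t 1 * ω t 2 - l * ω t 1)
    (e2 : ∀ t, 4 * ω' t 1 = -(3 * ω t 2 * ω t 0) + l * ω t 0 - ν t 2)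
    (e3 : ∀ t, ω' t 2 = ν t 1)
    (e4 : ∀ t, ν' t 0 = ν t 1 * ω t 2 - ν t 2 * ω t 1)
    (e5 : ∀ t, ν' t 1 = ν t 2 * ω t 0 - ν t 0 * ω t 2)
    (e6 : ∀ t, ν' t 2 = ν t 0 * ω t 1 - ν t 1 * ω t 0) :
    let G : ℝ → ℝ := fun t =>
      4 * (ω t 0 * ν t 0 + ω t 1 * ν t 1) + (ω t 2 + l) * ν t 2
    let K : ℝ → ℝ := fun t =>
      2 * (ω t 2 - l) * (ω t 0 ^ 2 + ω t 1 ^ 2) + 2 * ω t 0 * ν t 2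
    (∀ t s : ℝ, G t = G s) ∧
    (∀ t : ℝ, HasDerivAt K (ω t 1 / 2 * G t) t) ∧
    ((∃ t₀ : ℝ, G t₀ = 0) → ∀ t s : ℝ, K t = K s) := by
  have hG : ∀ t s, areaIntegral l ω ν t = areaIntegral l ω ν s :=
    is_const_of_hasDerivAt_zero fun t =>
      hasDerivAt_areaIntegral (hω t) (hν t) (e1 t) (e2 t) (e3 t) (e4 t) (e5 t) (e6 t)
  have hK : ∀ t, HasDerivAt (sretenskyFunction l ω ν) (ω t 1 / 2 * areaIntegral l ω ν t) t :=
    fun t => hasDerivAt_sretenskyFunction (hω t) (hν t 2) (e1 t) (e2 t) (e3 t) (e6 t)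
  refine ⟨hG, hK, ?_⟩
  rintro ⟨t₀, hG₀⟩
  have hG₀ : areaIntegral l ω ν t₀ = 0 := hG₀
  refine is_const_of_hasDerivAt_zero fun t => ?_
  rw [← mul_zero (ω t 1 / 2), ← hG₀, ← hG t t₀]
  exact hK t
end

section
/- Let λ, h ∈ ℝ satisfy λ² − 2 < 2h < 2, set a = √(2(h + 1)), ζ₁ = λ − a < 0, ζ₃ = λ + a > 0, and let W(z) = −(z(z − λ)² − 2(h + 1)z)·(z(z − λ)² − 2(h − 1)z). Call a pair of continuously differentiable functions x, y : ℝ → ℝ a pseudotrajectory if x(τ) ∈ (0, ζ₃] and y(τ) ∈ [ζ₁, 0) for all τ, (x'(τ))² = W(x(τ)) and (y'(τ))² = W(y(τ)) for all τ, x(τ) → 0 and y(τ) → 0 as τ → ±∞, and each of x' and y' vanishes at exactly one value of τ. Then for every pseudotrajectory the limits φ₊ = lim_{τ→+∞} y(τ)/x(τ) and φ₋ = lim_{τ→−∞} y(τ)/x(τ) exist and are finite and nonzero, and the product θ = φ₊·φ₋ is the same for all pseudotrajectories (it depends only on λ and h). -/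
/-!
Write `W z = z² Q z` with `Q 0 = μ² > 0`. A component `x` of a pseudotrajectory reaches the
turning point `ζ₃` exactly at its critical time `τ₀`, and afterwards `x' = -x √(Q x)`; hence
`T (x τ) = τ - τ₀ + inf T` for the travel time `T z = ∫_z^c dt / (t √(Q t))`, whose infimum does
not depend on the trajectory. Because `√(Q 0) = μ`, `log z + μ T z` has a limit as `z → 0⁺`, so
`log x τ + μ τ → K + μ τ₀` as `τ → +∞` and, reversing time, `log x τ - μ τ → K - μ τ₀` as
`τ → -∞`, with `K` depending on `Q` only. The same holds for `-y` with `l` replaced by `-l`, so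
in `φ₊ φ₋` the phases `τ₀` and `σ₀` cancel and `θ = exp (2 (K' - K))`.
-/

open Filter Set Topology Real MeasureTheory

noncomputable def travelTime (Q : ℝ → ℝ) (c z : ℝ) : ℝ :=
  ∫ t in z..c, (t * √(Q t))⁻¹

section travelTime

variable {Q : ℝ → ℝ} {zmax c : ℝ}

lemma continuousOn_inv_mul_sqrt {s : Set ℝ} (hQ : Continuous Q) (hs : s ⊆ Ioi 0)
    (hQpos : ∀ t ∈ s, 0 < Q t) : ContinuousOn (fun t => (t * √(Q t))⁻¹) s :=
  (continuous_id.mul hQ.sqrt).continuousOn.inv₀ fun t ht =>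
    (mul_pos (hs ht) (sqrt_pos.2 (hQpos t ht))).ne'

lemma hasDerivAt_travelTime (hQ : Continuous Q) (hQpos : ∀ z ∈ Ioo 0 zmax, 0 < Q z)
    (hc : c ∈ Ioo 0 zmax) {z : ℝ} (hz : z ∈ Ioo 0 zmax) :
    HasDerivAt (travelTime Q c) (-(z * √(Q z))⁻¹) z := by
  have hcont := continuousOn_inv_mul_sqrt hQ (fun _ h => h.1) hQpos
  exact intervalIntegral.integral_hasDerivAt_left
    ((hcont.mono (ordConnected_Ioo.uIcc_subset hz hc)).intervalIntegrable)
    (hcont.stronglyMeasurableAtFilter isOpen_Ioo z hz)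
    (hcont.continuousAt (isOpen_Ioo.mem_nhds hz))

lemma travelTime_antitoneOn (hQ : Continuous Q) (hQpos : ∀ z ∈ Ioo 0 zmax, 0 < Q z)
    (hc : c ∈ Ioo 0 zmax) : AntitoneOn (travelTime Q c) (Ioo 0 zmax) := by
  have hderiv := fun z (hz : z ∈ Ioo 0 zmax) => hasDerivAt_travelTime hQ hQpos hc hz
  refine antitoneOn_of_deriv_nonpos (convex_Ioo 0 zmax)
    (fun z hz => (hderiv z hz).continuousAt.continuousWithinAt)
    (fun z hz => (hderiv z (interior_subset hz)).differentiableAt.differentiableWithinAt)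
    fun z hz => ?_
  rw [interior_Ioo] at hz
  rw [(hderiv z hz).deriv, neg_nonpos]
  exact inv_nonneg.2 (mul_nonneg hz.1.le (sqrt_nonneg _))

lemma travelTime_comp_eq (hQ : Continuous Q) (hQpos : ∀ z ∈ Ioo 0 zmax, 0 < Q z)
    (hc : c ∈ Ioo 0 zmax) {x : ℝ → ℝ} {τ₀ : ℝ}
    (hx : ∀ τ ∈ Ioi τ₀, HasDerivAt x (-(x τ * √(Q (x τ)))) τ)
    (hmem : ∀ τ ∈ Ioi τ₀, x τ ∈ Ioo 0 zmax) (hx₀ : Tendsto x (𝓝[>] τ₀) (𝓝 zmax)) :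
    ∀ τ ∈ Ioi τ₀, travelTime Q c (x τ) = τ - τ₀ + sInf (travelTime Q c '' Ioo 0 zmax) := by
  have hderiv : ∀ τ ∈ Ioi τ₀, HasDerivAt (fun σ => travelTime Q c (x σ)) 1 τ := by
    intro τ hτ
    have hne : x τ * √(Q (x τ)) ≠ 0 :=
      (mul_pos (hmem τ hτ).1 (sqrt_pos.2 (hQpos _ (hmem τ hτ)))).ne'
    have := (hasDerivAt_travelTime hQ hQpos hc (hmem τ hτ)).comp τ (hx τ hτ)
    rwa [neg_mul_neg, inv_mul_cancel₀ hne] at this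
  obtain ⟨C, hC⟩ := isOpen_Ioi.exists_eq_add_of_deriv_eq isPreconnected_Ioi
    (fun τ hτ => (hderiv τ hτ).differentiableAt.differentiableWithinAt)
    differentiableOn_id (fun τ hτ => by rw [(hderiv τ hτ).deriv, deriv_id])
  have hglb : IsGLB (travelTime Q c '' Ioo 0 zmax) (τ₀ + C) := by
    refine ⟨?_, fun b hb => ?_⟩
    · rintro _ ⟨z, hz, rfl⟩
      obtain ⟨τ, hzτ, hτ⟩ :=
        ((hx₀.eventually (lt_mem_nhds hz.2)).and self_mem_nhdsWithin).exists
      calc τ₀ + C ≤ τ + C := add_le_add_left (le_of_lt hτ) C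
        _ = travelTime Q c (x τ) := (hC hτ).symm
        _ ≤ travelTime Q c z := travelTime_antitoneOn hQ hQpos hc hz (hmem τ hτ) hzτ.le
    · refine ge_of_tendsto (x := 𝓝[>] τ₀) (f := fun τ => τ + C) ?_
        (eventually_mem_nhdsWithin.mono fun τ hτ => ?_)
      · exact ((continuous_add_const C).tendsto τ₀).mono_left nhdsWithin_le_nhds
      · exact (show travelTime Q c (x τ) = τ + C from hC hτ) ▸ hb ⟨x τ, hmem τ hτ, rfl⟩
  intro τ hτ
  rw [hglb.csInf_eq ⟨_, mem_image_of_mem _ hc⟩]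
  linarith [show travelTime Q c (x τ) = τ + C from hC hτ]

lemma inv_sub_mul_inv_mul_sqrt {Q R : ℝ → ℝ} {μ t : ℝ} (hQR : Q t = μ ^ 2 + t * R t)
    (hμ : 0 < μ) (ht : 0 < t) (hQt : 0 < Q t) :
    t⁻¹ - μ * (t * √(Q t))⁻¹ = R t / (√(Q t) * (√(Q t) + μ)) := by
  have hs : 0 < √(Q t) := sqrt_pos.2 hQt
  have hsq : √(Q t) ^ 2 = μ ^ 2 + t * R t := by rw [sq_sqrt hQt.le, hQR]
  have : √(Q t) + μ ≠ 0 := by positivity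
  field_simp
  linear_combination hsq

/-- Since `√Q(0) = μ`, the singular parts of `log z` and `μ · travelTime Q c z` cancel at `0`. -/
lemma exists_tendsto_log_add_mul_travelTime {R : ℝ → ℝ} {μ : ℝ} (hR : Continuous R)
    (hQR : ∀ z, Q z = μ ^ 2 + z * R z) (hμ : 0 < μ) (hc : 0 < c)
    (hQpos : ∀ z ∈ Ioc 0 c, 0 < Q z) :
    ∃ A, Tendsto (fun z => log z + μ * travelTime Q c z) (𝓝[>] 0) (𝓝 A) := by
  have hQ : Continuous Q := by
    rw [show Q = fun z => μ ^ 2 + z * R z from funext hQR]; fun_prop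
  have hQpos' : ∀ z ∈ Icc 0 c, 0 < Q z := fun z hz =>
    hz.1.eq_or_lt.elim (fun h => by rw [← h, hQR]; simpa using pow_pos hμ 2)
      fun h => hQpos z ⟨h, hz.2⟩
  set g : ℝ → ℝ := fun t => R t / (√(Q t) * (√(Q t) + μ))
  have hg : ContinuousOn g (Icc 0 c) := hR.continuousOn.div (by fun_prop) fun t ht =>
    (mul_pos (sqrt_pos.2 (hQpos' t ht)) (by positivity)).ne'
  have hlog : ∀ z ∈ Ioc 0 c, log z + μ * travelTime Q c z = log c - ∫ t in z..c, g t := by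
    intro z hz
    have hsub : uIcc z c ⊆ Ioc 0 c := by
      rw [uIcc_of_le hz.2]; exact Icc_subset_Ioc hz.1 le_rfl
    have hinv : IntervalIntegrable (fun t => t⁻¹) volume z c :=
      intervalIntegral.intervalIntegrable_inv (fun t ht => (hsub ht).1.ne') continuousOn_id
    have htime : IntervalIntegrable (fun t => (t * √(Q t))⁻¹) volume z c :=
      (continuousOn_inv_mul_sqrt hQ (hsub.trans Ioc_subset_Ioi_self)
        fun t ht => hQpos t (hsub ht)).intervalIntegrable
    calc log z + μ * travelTime Q c z
        = log c - ((∫ t in z..c, t⁻¹) - μ * travelTime Q c z) := by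
          rw [integral_inv_of_pos hz.1 hc, log_div hc.ne' hz.1.ne']; ring
      _ = log c - ∫ t in z..c, (t⁻¹ - μ * (t * √(Q t))⁻¹) := by
          rw [intervalIntegral.integral_sub hinv (htime.const_mul μ),
            intervalIntegral.integral_const_mul, travelTime]
      _ = log c - ∫ t in z..c, g t := by
          congr 1
          refine intervalIntegral.integral_congr fun t ht => ?_
          exact inv_sub_mul_inv_mul_sqrt (hQR t) hμ (hsub ht).1 (hQpos t (hsub ht))
  have hprim : ContinuousWithinAt (fun z => ∫ t in z..c, g t) (Icc 0 c) 0 := by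
    have hint : IntegrableOn g (uIcc 0 c) := by rw [uIcc_of_le hc.le]; exact hg.integrableOn_Icc
    have := intervalIntegral.continuousOn_primitive_interval_left hint
    rw [uIcc_of_le hc.le] at this
    exact this 0 ⟨le_rfl, hc.le⟩
  refine ⟨log c - ∫ t in (0 : ℝ)..c, g t, ?_⟩
  refine (tendsto_const_nhds.sub
    (hprim.mono_of_mem_nhdsWithin (Icc_mem_nhdsGT hc)).tendsto).congr' ?_
  filter_upwards [Ioc_mem_nhdsGT hc] with z hz using (hlog z hz).symm

lemma exists_tendsto_log_add_mul_atTop {R : ℝ → ℝ} {μ : ℝ} (hR : Continuous R)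
    (hQR : ∀ z, Q z = μ ^ 2 + z * R z) (hμ : 0 < μ) (hzmax : 0 < zmax)
    (hQpos : ∀ z ∈ Ioo 0 zmax, 0 < Q z) :
    ∃ K, ∀ (x : ℝ → ℝ) (τ₀ : ℝ), (∀ τ ∈ Ioi τ₀, HasDerivAt x (-(x τ * √(Q (x τ)))) τ) →
      (∀ τ ∈ Ioi τ₀, x τ ∈ Ioo 0 zmax) → Tendsto x (𝓝[>] τ₀) (𝓝 zmax) →
      Tendsto x atTop (𝓝 0) → Tendsto (fun τ => log (x τ) + μ * τ) atTop (𝓝 (K + μ * τ₀)) := by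
  have hQ : Continuous Q := by
    rw [show Q = fun z => μ ^ 2 + z * R z from funext hQR]; fun_prop
  have hc : zmax / 2 ∈ Ioo 0 zmax := ⟨half_pos hzmax, half_lt_self hzmax⟩
  obtain ⟨A, hA⟩ := exists_tendsto_log_add_mul_travelTime hR hQR hμ hc.1
    fun z hz => hQpos z ⟨hz.1, hz.2.trans_lt hc.2⟩
  set Λ := sInf (travelTime Q (zmax / 2) '' Ioo 0 zmax)
  refine ⟨A - μ * Λ, fun x τ₀ hx hmem hx₀ htop => ?_⟩
  have hx0 : Tendsto x atTop (𝓝[>] 0) := tendsto_nhdsWithin_iff.2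
    ⟨htop, (eventually_gt_atTop τ₀).mono fun τ hτ => (hmem τ hτ).1⟩
  rw [show A - μ * Λ + μ * τ₀ = A + (μ * τ₀ - μ * Λ) by ring]
  refine ((hA.comp hx0).add_const _).congr' ?_
  filter_upwards [eventually_gt_atTop τ₀] with τ hτ
  simp only [Function.comp, travelTime_comp_eq hQ hQpos hc hx hmem hx₀ τ hτ]
  ring

end travelTime

lemma deriv_neg_of_critical_lt {x : ℝ → ℝ} (hx : ContDiff ℝ 1 x) (htop : Tendsto x atTop (𝓝 0))
    {τ₀ t : ℝ} (hτ₀ : ∀ τ, deriv x τ = 0 → τ = τ₀) (ht : τ₀ < t) (hpos : 0 < x t) :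
    deriv x t < 0 := by
  have hd : Differentiable ℝ x := hx.differentiable one_ne_zero
  -- if `x' t > 0`, the decay of `x` gives a later point where `x' < 0`, and `x'` vanishes between
  refine lt_of_le_of_ne (not_lt.1 fun hlt => ?_) fun h => ht.ne' (hτ₀ t h)
  obtain ⟨s, hs, hts⟩ : ∃ s, x s < x t ∧ t < s :=
    ((htop.eventually (gt_mem_nhds hpos)).and (eventually_gt_atTop t)).exists
  obtain ⟨c, hc, hslope⟩ := exists_deriv_eq_slope x hts hd.continuous.continuousOn
    hd.differentiableOn
  have hc_neg : deriv x c < 0 := hslope ▸ div_neg_of_neg_of_pos (sub_neg.2 hs) (sub_pos.2 hts)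
  obtain ⟨d, hdI, hd0⟩ := intermediate_value_Icc' hc.1.le
    (hx.continuous_deriv le_rfl).continuousOn ⟨hc_neg.le, hlt.le⟩
  exact absurd (hτ₀ d hd0 ▸ hdI.1) (not_le.2 ht)

/-- A component of a pseudotrajectory, for the potential `W z = z ^ 2 * Q z`. -/
structure IsHomoclinic (Q : ℝ → ℝ) (zmax : ℝ) (x : ℝ → ℝ) : Prop where
  contDiff : ContDiff ℝ 1 x
  mem_Ioc : ∀ τ, x τ ∈ Ioc 0 zmax
  deriv_sq : ∀ τ, deriv x τ ^ 2 = x τ ^ 2 * Q (x τ)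
  tendsto_atTop : Tendsto x atTop (𝓝 0)
  tendsto_atBot : Tendsto x atBot (𝓝 0)
  existsUnique_deriv_eq_zero : ∃! τ, deriv x τ = 0

namespace IsHomoclinic

variable {Q : ℝ → ℝ} {zmax : ℝ} {x : ℝ → ℝ} {τ₀ t : ℝ}

lemma comp_neg (hx : IsHomoclinic Q zmax x) : IsHomoclinic Q zmax (fun τ => x (-τ)) := by
  obtain ⟨τ₀, h0, huniq⟩ := hx.existsUnique_deriv_eq_zero
  refine ⟨hx.contDiff.comp contDiff_neg, fun τ => hx.mem_Ioc (-τ), fun τ => ?_,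
    hx.tendsto_atBot.comp tendsto_neg_atTop_atBot, hx.tendsto_atTop.comp tendsto_neg_atBot_atTop,
    ⟨-τ₀, ?_, fun τ hτ => ?_⟩⟩
  · rw [deriv_comp_neg, neg_sq]; exact hx.deriv_sq (-τ)
  · simp only [deriv_comp_neg, neg_neg, h0, neg_zero]
  · simp only [deriv_comp_neg, neg_eq_zero] at hτ
    rw [← huniq _ hτ, neg_neg]

lemma apply_eq_of_deriv_eq_zero (hx : IsHomoclinic Q zmax x) (hQpos : ∀ z ∈ Ioo 0 zmax, 0 < Q z)
    (h0 : deriv x τ₀ = 0) : x τ₀ = zmax := by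
  obtain ⟨hpos, hle⟩ := hx.mem_Ioc τ₀
  refine hle.eq_or_lt.resolve_right fun hlt => ?_
  have := hx.deriv_sq τ₀
  rw [h0] at this
  nlinarith [mul_pos (pow_pos hpos 2) (hQpos _ ⟨hpos, hlt⟩)]

lemma deriv_neg_of_lt (hx : IsHomoclinic Q zmax x) (h0 : deriv x τ₀ = 0) (ht : τ₀ < t) :
    deriv x t < 0 :=
  deriv_neg_of_critical_lt hx.contDiff hx.tendsto_atTop
    (fun _ hτ => hx.existsUnique_deriv_eq_zero.unique hτ h0) ht (hx.mem_Ioc t).1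

lemma lt_of_deriv_ne_zero (hx : IsHomoclinic Q zmax x) (ht : deriv x t ≠ 0) : x t < zmax :=
  (hx.mem_Ioc t).2.lt_of_ne fun h =>
    ht (IsLocalMax.deriv_eq_zero (Eventually.of_forall fun τ => h ▸ (hx.mem_Ioc τ).2))

lemma hasDerivAt_of_deriv_neg (hx : IsHomoclinic Q zmax x) (ht : deriv x t < 0) :
    HasDerivAt x (-(x t * √(Q (x t)))) t := by
  have hsqrt : -deriv x t = x t * √(Q (x t)) := by
    rw [← sqrt_sq (neg_nonneg.2 ht.le), neg_sq, hx.deriv_sq, sqrt_mul (sq_nonneg _),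
      sqrt_sq (hx.mem_Ioc t).1.le]
  rw [← hsqrt, neg_neg]
  exact ((hx.contDiff.differentiable one_ne_zero) t).hasDerivAt

end IsHomoclinic

lemma exists_tendsto_log_add_mul_of_isHomoclinic {Q R : ℝ → ℝ} {μ zmax : ℝ} (hR : Continuous R)
    (hQR : ∀ z, Q z = μ ^ 2 + z * R z) (hμ : 0 < μ) (hzmax : 0 < zmax)
    (hQpos : ∀ z ∈ Ioo 0 zmax, 0 < Q z) :
    ∃ K, ∀ x, IsHomoclinic Q zmax x → ∃ τ₀,
      Tendsto (fun τ => log (x τ) + μ * τ) atTop (𝓝 (K + μ * τ₀)) ∧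
      Tendsto (fun τ => log (x τ) - μ * τ) atBot (𝓝 (K - μ * τ₀)) := by
  obtain ⟨K, hK⟩ := exists_tendsto_log_add_mul_atTop hR hQR hμ hzmax hQpos
  have hdescent : ∀ x, IsHomoclinic Q zmax x → ∀ τ₀, deriv x τ₀ = 0 →
      Tendsto (fun τ => log (x τ) + μ * τ) atTop (𝓝 (K + μ * τ₀)) := by
    intro x hx τ₀ h0
    refine hK x τ₀ (fun τ hτ => hx.hasDerivAt_of_deriv_neg (hx.deriv_neg_of_lt h0 hτ))
      (fun τ hτ => ⟨(hx.mem_Ioc τ).1, hx.lt_of_deriv_ne_zero (hx.deriv_neg_of_lt h0 hτ).ne⟩)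
      ?_ hx.tendsto_atTop
    rw [← hx.apply_eq_of_deriv_eq_zero hQpos h0]
    exact hx.contDiff.continuous.continuousAt.tendsto.mono_left nhdsWithin_le_nhds
  refine ⟨K, fun x hx => ?_⟩
  obtain ⟨τ₀, h0, -⟩ := hx.existsUnique_deriv_eq_zero
  refine ⟨τ₀, hdescent x hx τ₀ h0, ?_⟩
  have := (hdescent _ hx.comp_neg (-τ₀) (by simp only [deriv_comp_neg, neg_neg, h0, neg_zero])).comp
    tendsto_neg_atBot_atTop
  convert this using 2 with τ
  · simp only [Function.comp, neg_neg]; ring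
  · ring

lemma isHomoclinic_neg {Q : ℝ → ℝ} {zmin : ℝ} {y : ℝ → ℝ} (hy : ContDiff ℝ 1 y)
    (hmem : ∀ τ, y τ ∈ Ico zmin 0) (hsq : ∀ τ, deriv y τ ^ 2 = y τ ^ 2 * Q (-y τ))
    (htop : Tendsto y atTop (𝓝 0)) (hbot : Tendsto y atBot (𝓝 0)) (huniq : ∃! τ, deriv y τ = 0) :
    IsHomoclinic Q (-zmin) (fun τ => -y τ) := by
  have hderiv : ∀ τ, deriv (fun σ => -y σ) τ = -deriv y τ := fun τ => deriv.fun_neg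
  refine ⟨hy.neg, fun τ => ⟨neg_pos.2 (hmem τ).2, neg_le_neg (hmem τ).1⟩, fun τ => ?_,
    by simpa using htop.neg, by simpa using hbot.neg, by simpa only [hderiv, neg_eq_zero]⟩
  rw [hderiv, neg_sq, neg_sq]
  exact hsq τ

lemma tendsto_div_of_tendsto_log_sub {x y : ℝ → ℝ} {L : Filter ℝ} {c : ℝ} (hx : ∀ τ, 0 < x τ)
    (hy : ∀ τ, 0 < y τ) (h : Tendsto (fun τ => log (y τ) - log (x τ)) L (𝓝 c)) :
    Tendsto (fun τ => y τ / x τ) L (𝓝 (exp c)) :=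
  ((continuous_exp.tendsto c).comp h).congr fun τ => by
    simp only [Function.comp, exp_sub, exp_log (hx τ), exp_log (hy τ)]

lemma mem_Ioo_sub_sqrt_add_sqrt_iff {l c z : ℝ} :
    z ∈ Ioo (l - √c) (l + √c) ↔ (z - l) ^ 2 < c := by
  rw [← sq_abs, ← lt_sqrt (abs_nonneg _), abs_lt, mem_Ioo]
  constructor <;> rintro ⟨h₁, h₂⟩ <;> constructor <;> linarith

/-- The potential `W` of the statement is `W z = z ^ 2 * chaplyginQ l h z`. -/
def chaplyginQ (l h z : ℝ) : ℝ :=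
  -(((z - l) ^ 2 - 2 * (h + 1)) * ((z - l) ^ 2 - 2 * (h - 1)))

lemma chaplyginQ_eq_add (l h z : ℝ) :
    chaplyginQ l h z = chaplyginQ l h 0 + z * ((z - 2 * l) * (4 * h - (z - l) ^ 2 - l ^ 2)) := by
  unfold chaplyginQ; ring

lemma chaplyginQ_neg (l h z : ℝ) : chaplyginQ (-l) h z = chaplyginQ l h (-z) := by
  unfold chaplyginQ; ring

lemma chaplyginQ_pos {l h z : ℝ} (h2 : h < 1) (hz : (z - l) ^ 2 < 2 * (h + 1)) :
    0 < chaplyginQ l h z := by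
  have : chaplyginQ l h z = (2 * (h + 1) - (z - l) ^ 2) * ((z - l) ^ 2 - 2 * (h - 1)) := by
    unfold chaplyginQ; ring
  rw [this]
  exact mul_pos (by linarith) (by nlinarith [sq_nonneg (z - l)])

lemma exists_tendsto_log_add_mul_chaplygin {l h : ℝ} (h1 : l ^ 2 - 2 < 2 * h) (h2 : 2 * h < 2) :
    ∃ K, ∀ x, IsHomoclinic (chaplyginQ l h) (l + √(2 * (h + 1))) x → ∃ τ₀,
      Tendsto (fun τ => log (x τ) + √(chaplyginQ l h 0) * τ) atTop
        (𝓝 (K + √(chaplyginQ l h 0) * τ₀)) ∧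
      Tendsto (fun τ => log (x τ) - √(chaplyginQ l h 0) * τ) atBot
        (𝓝 (K - √(chaplyginQ l h 0) * τ₀)) := by
  have hQpos : ∀ z ∈ Ioo (l - √(2 * (h + 1))) (l + √(2 * (h + 1))), 0 < chaplyginQ l h z :=
    fun z hz => chaplyginQ_pos (by linarith) (mem_Ioo_sub_sqrt_add_sqrt_iff.1 hz)
  have h0 : (0 : ℝ) ∈ Ioo (l - √(2 * (h + 1))) (l + √(2 * (h + 1))) :=
    mem_Ioo_sub_sqrt_add_sqrt_iff.2 (by linarith)
  refine exists_tendsto_log_add_mul_of_isHomoclinic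
    (R := fun z => (z - 2 * l) * (4 * h - (z - l) ^ 2 - l ^ 2)) (by fun_prop) (fun z => ?_)
    (sqrt_pos.2 (hQpos 0 h0)) h0.2 fun z hz => hQpos z ⟨h0.1.trans hz.1, hz.2⟩
  rw [sq_sqrt (hQpos 0 h0).le]
  exact chaplyginQ_eq_add l h z

/-- Lemma 5.4.2: for every pseudotrajectory `(x(τ), y(τ))` of the separated
Chaplygin–Sretensky equations on the critical level `k = 0`,
`λ² − 2 < 2h < 2`, the limits `φ₊ = lim_{τ→+∞} y/x` and `φ₋ = lim_{τ→−∞} y/x`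
exist, are finite and nonzero, and their product `θ = φ₊·φ₋` is the same for
all pseudotrajectories. -/
theorem stmt14 (l h : ℝ) (h1 : l^2 - 2 < 2*h) (h2 : 2*h < 2) :
    let a : ℝ := Real.sqrt (2*(h + 1))
    let ζ₁ : ℝ := l - a
    let ζ₃ : ℝ := l + a
    let W : ℝ → ℝ := fun z =>
      -((z * (z - l)^2 - 2*(h + 1)*z) * (z * (z - l)^2 - 2*(h - 1)*z))
    ∃ θ : ℝ, θ ≠ 0 ∧
      ∀ x y : ℝ → ℝ, ContDiff ℝ 1 x → ContDiff ℝ 1 y →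
        (∀ τ : ℝ, x τ ∈ Set.Ioc 0 ζ₃) → (∀ τ : ℝ, y τ ∈ Set.Ico ζ₁ 0) →
        (∀ τ : ℝ, (deriv x τ)^2 = W (x τ)) → (∀ τ : ℝ, (deriv y τ)^2 = W (y τ)) →
        Tendsto x atTop (nhds 0) → Tendsto x atBot (nhds 0) →
        Tendsto y atTop (nhds 0) → Tendsto y atBot (nhds 0) →
        (∃! τ : ℝ, deriv x τ = 0) → (∃! τ : ℝ, deriv y τ = 0) →
        ∃ φp φm : ℝ, φp ≠ 0 ∧ φm ≠ 0 ∧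
          Tendsto (fun τ => y τ / x τ) atTop (nhds φp) ∧
          Tendsto (fun τ => y τ / x τ) atBot (nhds φm) ∧
          φp * φm = θ := by
  intro a ζ₁ ζ₃ W
  obtain ⟨K, hK⟩ := exists_tendsto_log_add_mul_chaplygin h1 h2
  obtain ⟨K', hK'⟩ := exists_tendsto_log_add_mul_chaplygin (l := -l) (by linarith [neg_sq l]) h2
  set μ := √(chaplyginQ l h 0)
  simp only [chaplyginQ_neg, neg_zero] at hK'
  refine ⟨exp (2 * (K' - K)), exp_ne_zero _,
    fun x y hx hy hmx hmy hox hoy hxT hxB hyT hyB hux huy => ?_⟩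
  obtain ⟨τ₀, hxtop, hxbot⟩ := hK x ⟨hx, hmx, fun τ => by rw [hox]; unfold chaplyginQ; ring,
    hxT, hxB, hux⟩
  obtain ⟨σ₀, hytop, hybot⟩ := hK' _ ((show -ζ₁ = -l + a by ring) ▸ isHomoclinic_neg hy hmy
    (fun τ => by rw [hoy]; unfold chaplyginQ; ring) hyT hyB huy)
  have hxpos : ∀ τ, 0 < x τ := fun τ => (hmx τ).1
  have hypos : ∀ τ, 0 < -y τ := fun τ => neg_pos.2 (hmy τ).2
  refine ⟨-exp (K' + μ * σ₀ - (K + μ * τ₀)), -exp (K' - μ * σ₀ - (K - μ * τ₀)),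
    neg_ne_zero.2 (exp_ne_zero _), neg_ne_zero.2 (exp_ne_zero _), ?_, ?_, ?_⟩
  · refine ((tendsto_div_of_tendsto_log_sub hxpos hypos ?_).neg).congr fun τ => by ring
    exact (hytop.sub hxtop).congr fun τ => by ring
  · refine ((tendsto_div_of_tendsto_log_sub hxpos hypos ?_).neg).congr fun τ => by ring
    exact (hybot.sub hxbot).congr fun τ => by ring
  · rw [neg_mul_neg, ← exp_add]
    congr 1
    ring
end

section
/- For every real number a with 0 < a < 2, the inequality ∫_{−π/2}^{π/2} (4 − a²·cos²φ) / ( √(4 + a²·sin²φ) · ( 2 + √(4 + a²·sin²φ)·cos φ ) ) dφ < 2 holds. (At a = 0 the integral equals exactly 2.) -/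
/-!
For `a ≠ 0` the integrand lies strictly below `1 / (1 + cos φ)`, the integrand at `a = 0`:
with `c = cos φ` and `s = √(4 + a² sin² φ)`, so that `s² = 4 + a² (1 - c²)`, clearing denominators
reduces the comparison to `4 < 2 s + a² c (1 + c)`, which holds because `s ≥ 2`, with `s > 2`
where `c = 0`. The integral of `1 / (1 + cos φ) = (tan (φ / 2))'` over `[-π/2, π/2]` is `2`.
-/

open Real Set intervalIntegral

noncomputable def phiIntegrand (a φ : ℝ) : ℝ :=
  (4 - a ^ 2 * cos φ ^ 2) / (√(4 + a ^ 2 * sin φ ^ 2) * (2 + √(4 + a ^ 2 * sin φ ^ 2) * cos φ))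

lemma two_le_sqrt_four_add {x : ℝ} (hx : 0 ≤ x) : 2 ≤ √(4 + x) :=
  Real.le_sqrt_of_sq_le (by linarith)

lemma phiIntegrand_zero (φ : ℝ) : phiIntegrand 0 φ = 1 / (1 + cos φ) := by
  have hsqrt : √(4 : ℝ) = 2 := by
    rw [show (4 : ℝ) = 2 ^ 2 by norm_num, sqrt_sq zero_le_two]
  simp only [phiIntegrand, ne_eq, OfNat.ofNat_ne_zero, not_false_eq_true, zero_pow, zero_mul,
    sub_zero, add_zero, hsqrt]
  rw [show (2 : ℝ) * (2 + 2 * cos φ) = 4 * (1 + cos φ) by ring, ← div_div, div_self four_ne_zero]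

lemma phiIntegrand_lt_one_div_one_add_cos {a φ : ℝ} (ha : a ≠ 0) (hc : 0 ≤ cos φ) :
    phiIntegrand a φ < 1 / (1 + cos φ) := by
  set c := cos φ
  set s := √(4 + a ^ 2 * sin φ ^ 2)
  have ha2 : 0 < a ^ 2 := by positivity
  have hs : 2 ≤ s := two_le_sqrt_four_add (by positivity)
  have hs_sq : s ^ 2 = 4 + a ^ 2 * (1 - c ^ 2) := by
    rw [sq_sqrt (by positivity), sin_sq]
  have key : 4 < 2 * s + a ^ 2 * c * (1 + c) := by
    rcases hc.eq_or_lt with hc0 | hc0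
    · rw [← hc0] at hs_sq ⊢
      nlinarith
    · nlinarith [mul_pos ha2 hc0]
  rw [phiIntegrand, div_lt_div_iff₀ (by positivity) (by positivity)]
  nlinarith

lemma continuousOn_phiIntegrand (a : ℝ) :
    ContinuousOn (phiIntegrand a) (Icc (-(π / 2)) (π / 2)) := by
  refine ContinuousOn.div (by fun_prop) (by fun_prop) fun φ hφ => ?_
  have hc := cos_nonneg_of_mem_Icc hφ
  have hs := two_le_sqrt_four_add (mul_nonneg (sq_nonneg a) (sq_nonneg (sin φ)))
  positivity

lemma hasDerivAt_tan_half {φ : ℝ} (h : cos (φ / 2) ≠ 0) :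
    HasDerivAt (fun x => tan (x / 2)) (1 / (1 + cos φ)) φ := by
  refine ((hasDerivAt_tan h).comp φ ((hasDerivAt_id' φ).div_const 2)).congr_deriv ?_
  rw [show 1 + cos φ = 2 * cos (φ / 2) ^ 2 by rw [cos_sq, show 2 * (φ / 2) = φ by ring]; ring]
  field_simp

lemma integral_one_div_one_add_cos :
    ∫ φ in -(π / 2)..π / 2, 1 / (1 + cos φ) = 2 := by
  have hπ := pi_pos
  have hle : -(π / 2) ≤ π / 2 := by linarith
  have hcont : ContinuousOn (fun φ => 1 / (1 + cos φ)) (Icc (-(π / 2)) (π / 2)) :=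
    (continuousOn_phiIntegrand 0).congr fun φ _ => (phiIntegrand_zero φ).symm
  rw [integral_eq_sub_of_hasDerivAt (f := fun φ => tan (φ / 2)) (fun φ hφ => ?_)
    (hcont.intervalIntegrable_of_Icc hle)]
  · rw [neg_div, tan_neg, show π / 2 / 2 = π / 4 by ring, tan_pi_div_four]
    norm_num
  · rw [uIcc_of_le hle] at hφ
    exact hasDerivAt_tan_half (cos_pos_of_mem_Ioo ⟨by linarith [hφ.1], by linarith [hφ.2]⟩).ne'

theorem stmt15_general (a : ℝ) (ha : 0 < a) :
    (∫ φ in (-(Real.pi/2))..(Real.pi/2),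
        (4 - a^2 * Real.cos φ ^ 2) /
          (Real.sqrt (4 + a^2 * Real.sin φ ^ 2) *
            (2 + Real.sqrt (4 + a^2 * Real.sin φ ^ 2) * Real.cos φ))) < 2 ∧
    (∫ φ in (-(Real.pi/2))..(Real.pi/2),
        (4 - (0:ℝ)^2 * Real.cos φ ^ 2) /
          (Real.sqrt (4 + (0:ℝ)^2 * Real.sin φ ^ 2) *
            (2 + Real.sqrt (4 + (0:ℝ)^2 * Real.sin φ ^ 2) * Real.cos φ))) = 2 := by
  change (∫ φ in -(π / 2)..π / 2, phiIntegrand a φ) < 2 ∧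
    ∫ φ in -(π / 2)..π / 2, phiIntegrand 0 φ = 2
  have hπ := pi_pos
  have h0 : ∫ φ in -(π / 2)..π / 2, phiIntegrand 0 φ = 2 := by
    simp only [phiIntegrand_zero, integral_one_div_one_add_cos]
  have hlt : ∀ φ ∈ Icc (-(π / 2)) (π / 2), phiIntegrand a φ < phiIntegrand 0 φ := fun φ hφ => by
    rw [phiIntegrand_zero]
    exact phiIntegrand_lt_one_div_one_add_cos ha.ne' (cos_nonneg_of_mem_Icc hφ)
  refine ⟨lt_of_lt_of_eq ?_ h0, h0⟩
  exact integral_lt_integral_of_continuousOn_of_le_of_exists_lt (by linarith)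
    (continuousOn_phiIntegrand a) (continuousOn_phiIntegrand 0)
    (fun φ hφ => (hlt φ (Ioc_subset_Icc_self hφ)).le)
    ⟨0, ⟨by linarith, by linarith⟩, hlt 0 ⟨by linarith, by linarith⟩⟩

/-- The integral `Φ(a)` from Section 5.4 satisfies `Φ(a) < 2` for `0 < a < 2`,
while at `a = 0` it equals exactly `2`. -/
theorem stmt15 (a : ℝ) (ha : 0 < a) (ha2 : a < 2) :
    (∫ φ in (-(Real.pi/2))..(Real.pi/2),
        (4 - a^2 * Real.cos φ ^ 2) /
          (Real.sqrt (4 + a^2 * Real.sin φ ^ 2) *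
            (2 + Real.sqrt (4 + a^2 * Real.sin φ ^ 2) * Real.cos φ))) < 2 ∧
    (∫ φ in (-(Real.pi/2))..(Real.pi/2),
        (4 - (0:ℝ)^2 * Real.cos φ ^ 2) /
          (Real.sqrt (4 + (0:ℝ)^2 * Real.sin φ ^ 2) *
            (2 + Real.sqrt (4 + (0:ℝ)^2 * Real.sin φ ^ 2) * Real.cos φ))) = 2 :=
  stmt15_general a ha
end

section
/- Let (ω, ν) : ℝ → ℝ³ × ℝ³ be a differentiable solution of the Kovalevskaya system. Then each of the following functions of t is constant along the solution: H' = 2(ω₁² + ω₂²) + ω₃² − 2ν₁ (energy), G' = 2(ω₁ν₁ + ω₂ν₂) + ω₃ν₃ (area integral), Γ = ν₁² + ν₂² + ν₃² (geometric integral), and the Kovalevskaya integral K = (ω₁² − ω₂² + ν₁)² + (2ω₁ω₂ + ν₂)². -/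
/-!
Each quantity is a polynomial in `(ω, ν)`, so along a solution its time derivative is, by the
chain rule, a polynomial in `ω, ν, ω', ν'`. Substituting the equations of motion for `ω'` and `ν'`
makes this derivative vanish identically; a function with zero derivative on `ℝ` is constant.
-/

theorem eq_of_hasDerivAt_zero {f : ℝ → ℝ} (hf : ∀ t, HasDerivAt f 0 t) (t s : ℝ) :
    f t = f s :=
  is_const_of_deriv_eq_zero (fun x => (hf x).differentiableAt) (fun x => (hf x).deriv) t s

namespace Kovalevskaya

def energy (ω ν : Fin 3 → ℝ) : ℝ :=
  2 * (ω 0 ^ 2 + ω 1 ^ 2) + ω 2 ^ 2 - 2 * ν 0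

def areaIntegral (ω ν : Fin 3 → ℝ) : ℝ :=
  2 * (ω 0 * ν 0 + ω 1 * ν 1) + ω 2 * ν 2

def geometricIntegral (ν : Fin 3 → ℝ) : ℝ :=
  ν 0 ^ 2 + ν 1 ^ 2 + ν 2 ^ 2

def kovalevskayaIntegral (ω ν : Fin 3 → ℝ) : ℝ :=
  (ω 0 ^ 2 - ω 1 ^ 2 + ν 0) ^ 2 + (2 * ω 0 * ω 1 + ν 1) ^ 2

variable {ω ν ω' ν' : ℝ → Fin 3 → ℝ}

theorem energy_conserved (hω : ∀ t i, HasDerivAt (fun s => ω s i) (ω' t i) t)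
    (hν : ∀ t i, HasDerivAt (fun s => ν s i) (ν' t i) t)
    (e1 : ∀ t, 2 * ω' t 0 = ω t 1 * ω t 2)
    (e2 : ∀ t, 2 * ω' t 1 = -(ω t 2 * ω t 0) - ν t 2)
    (e3 : ∀ t, ω' t 2 = ν t 1)
    (e4 : ∀ t, ν' t 0 = ω t 2 * ν t 1 - ω t 1 * ν t 2) (t s : ℝ) :
    energy (ω t) (ν t) = energy (ω s) (ν s) := by
  refine eq_of_hasDerivAt_zero (f := fun t => energy (ω t) (ν t)) (fun t => ?_) t s
  have h := ((((hω t 0).pow 2).add ((hω t 1).pow 2)).const_mul 2).add ((hω t 2).pow 2)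
    |>.sub ((hν t 0).const_mul 2)
  refine h.congr_deriv ?_
  push_cast
  linear_combination (2 * ω t 0) * e1 t + (2 * ω t 1) * e2 t + (2 * ω t 2) * e3 t - 2 * e4 t

theorem areaIntegral_conserved (hω : ∀ t i, HasDerivAt (fun s => ω s i) (ω' t i) t)
    (hν : ∀ t i, HasDerivAt (fun s => ν s i) (ν' t i) t)
    (e1 : ∀ t, 2 * ω' t 0 = ω t 1 * ω t 2)
    (e2 : ∀ t, 2 * ω' t 1 = -(ω t 2 * ω t 0) - ν t 2)
    (e3 : ∀ t, ω' t 2 = ν t 1)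
    (e4 : ∀ t, ν' t 0 = ω t 2 * ν t 1 - ω t 1 * ν t 2)
    (e5 : ∀ t, ν' t 1 = ω t 0 * ν t 2 - ω t 2 * ν t 0)
    (e6 : ∀ t, ν' t 2 = ω t 1 * ν t 0 - ω t 0 * ν t 1) (t s : ℝ) :
    areaIntegral (ω t) (ν t) = areaIntegral (ω s) (ν s) := by
  refine eq_of_hasDerivAt_zero (f := fun t => areaIntegral (ω t) (ν t)) (fun t => ?_) t s
  have h := ((((hω t 0).mul (hν t 0)).add ((hω t 1).mul (hν t 1))).const_mul 2).add
    ((hω t 2).mul (hν t 2))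
  refine h.congr_deriv ?_
  linear_combination (ν t 0) * e1 t + (ν t 1) * e2 t + (ν t 2) * e3 t
    + (2 * ω t 0) * e4 t + (2 * ω t 1) * e5 t + (ω t 2) * e6 t

theorem geometricIntegral_conserved (hν : ∀ t i, HasDerivAt (fun s => ν s i) (ν' t i) t)
    (e4 : ∀ t, ν' t 0 = ω t 2 * ν t 1 - ω t 1 * ν t 2)
    (e5 : ∀ t, ν' t 1 = ω t 0 * ν t 2 - ω t 2 * ν t 0)
    (e6 : ∀ t, ν' t 2 = ω t 1 * ν t 0 - ω t 0 * ν t 1) (t s : ℝ) :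
    geometricIntegral (ν t) = geometricIntegral (ν s) := by
  refine eq_of_hasDerivAt_zero (f := fun t => geometricIntegral (ν t)) (fun t => ?_) t s
  have h := (((hν t 0).pow 2).add ((hν t 1).pow 2)).add ((hν t 2).pow 2)
  refine h.congr_deriv ?_
  push_cast
  linear_combination (2 * ν t 0) * e4 t + (2 * ν t 1) * e5 t + (2 * ν t 2) * e6 t

theorem kovalevskayaIntegral_conserved (hω : ∀ t i, HasDerivAt (fun s => ω s i) (ω' t i) t)
    (hν : ∀ t i, HasDerivAt (fun s => ν s i) (ν' t i) t)
    (e1 : ∀ t, 2 * ω' t 0 = ω t 1 * ω t 2)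
    (e2 : ∀ t, 2 * ω' t 1 = -(ω t 2 * ω t 0) - ν t 2)
    (e4 : ∀ t, ν' t 0 = ω t 2 * ν t 1 - ω t 1 * ν t 2)
    (e5 : ∀ t, ν' t 1 = ω t 0 * ν t 2 - ω t 2 * ν t 0) (t s : ℝ) :
    kovalevskayaIntegral (ω t) (ν t) = kovalevskayaIntegral (ω s) (ν s) := by
  -- The pair `X = ω₁² - ω₂² + ν₁`, `Y = 2ω₁ω₂ + ν₂` rotates with angular velocity `ω₃`:
  -- `X' = ω₃ Y` and `Y' = -ω₃ X`, so `X² + Y²` is constant.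
  have hX : ∀ t, HasDerivAt (fun t => ω t 0 ^ 2 - ω t 1 ^ 2 + ν t 0)
      (ω t 2 * (2 * ω t 0 * ω t 1 + ν t 1)) t := fun t =>
    (((hω t 0).pow 2).sub ((hω t 1).pow 2)).add (hν t 0) |>.congr_deriv <| by
      push_cast
      linear_combination ω t 0 * e1 t - ω t 1 * e2 t + e4 t
  have hY : ∀ t, HasDerivAt (fun t => 2 * ω t 0 * ω t 1 + ν t 1)
      (-(ω t 2 * (ω t 0 ^ 2 - ω t 1 ^ 2 + ν t 0))) t := fun t =>
    (((hω t 0).const_mul 2).mul (hω t 1)).add (hν t 1) |>.congr_deriv <| by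
      linear_combination ω t 1 * e1 t + ω t 0 * e2 t + e5 t
  refine eq_of_hasDerivAt_zero (f := fun t => kovalevskayaIntegral (ω t) (ν t)) (fun t => ?_) t s
  refine (((hX t).pow 2).add ((hY t).pow 2)).congr_deriv ?_
  push_cast
  ring

end Kovalevskaya

/-- The energy, area integral, geometric integral and Kovalevskaya integral are
constant along any differentiable solution of the Kovalevskaya system. -/
theorem stmt16 (ω ν ω' ν' : ℝ → Fin 3 → ℝ)
    (hω : ∀ t i, HasDerivAt (fun s => ω s i) (ω' t i) t)
    (hν : ∀ t i, HasDerivAt (fun s => ν s i) (ν' t i) t)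
    (e1 : ∀ t, 2 * ω' t 0 = ω t 1 * ω t 2)
    (e2 : ∀ t, 2 * ω' t 1 = -(ω t 2 * ω t 0) - ν t 2)
    (e3 : ∀ t, ω' t 2 = ν t 1)
    (e4 : ∀ t, ν' t 0 = ω t 2 * ν t 1 - ω t 1 * ν t 2)
    (e5 : ∀ t, ν' t 1 = ω t 0 * ν t 2 - ω t 2 * ν t 0)
    (e6 : ∀ t, ν' t 2 = ω t 1 * ν t 0 - ω t 0 * ν t 1) :
    (∀ t s : ℝ,
      2*(ω t 0 ^ 2 + ω t 1 ^ 2) + ω t 2 ^ 2 - 2 * ν t 0 =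
        2*(ω s 0 ^ 2 + ω s 1 ^ 2) + ω s 2 ^ 2 - 2 * ν s 0) ∧
    (∀ t s : ℝ,
      2*(ω t 0 * ν t 0 + ω t 1 * ν t 1) + ω t 2 * ν t 2 =
        2*(ω s 0 * ν s 0 + ω s 1 * ν s 1) + ω s 2 * ν s 2) ∧
    (∀ t s : ℝ,
      ν t 0 ^ 2 + ν t 1 ^ 2 + ν t 2 ^ 2 = ν s 0 ^ 2 + ν s 1 ^ 2 + ν s 2 ^ 2) ∧
    (∀ t s : ℝ,
      (ω t 0 ^ 2 - ω t 1 ^ 2 + ν t 0)^2 + (2 * ω t 0 * ω t 1 + ν t 1)^2 =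
        (ω s 0 ^ 2 - ω s 1 ^ 2 + ν s 0)^2 + (2 * ω s 0 * ω s 1 + ν s 1)^2) :=
  ⟨Kovalevskaya.energy_conserved hω hν e1 e2 e3 e4,
    Kovalevskaya.areaIntegral_conserved hω hν e1 e2 e3 e4 e5 e6,
    Kovalevskaya.geometricIntegral_conserved hν e4 e5 e6,
    Kovalevskaya.kovalevskayaIntegral_conserved hω hν e1 e2 e4 e5⟩
end

section
/- Let ω, ν ∈ ℝ³ satisfy ν₁² + ν₂² + ν₃² = 1, and define h, g, k ∈ ℝ by 2h = 2(ω₁² + ω₂²) + ω₃² − 2ν₁, 2g = 2(ω₁ν₁ + ω₂ν₂) + ω₃ν₃, and k = (ω₁² − ω₂² + ν₁)² + (2ω₁ω₂ + ν₂)². Then the identity −(ω₁² + ω₂²)² + 2h(ω₁² + ω₂²) + 4gω₁ + 1 − k = (ω₁ω₃ + ν₃)² + ω₂²ω₃² holds. In particular, if ω₂ = 0 then the Kovalevskaya polynomial R(x) = −x⁴ + 2hx² + 4gx + 1 − k satisfies R(ω₁) = (ω₁ω₃ + ν₃)² and R'(ω₁) = 2ω₃(ω₁ω₃ + ν₃).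 -/
/-! Substituting `h`, `g` and `k` turns `R(x₁, x₂)` into a polynomial in `ω` and `ν` that differs
from `(ω₁ω₃ + ν₃)² + ω₂²ω₃²` by `1 - |ν|²`, which vanishes on the unit sphere. For `ω₂ = 0` the
derivative `R'(ω₁) = -4ω₁³ + 4hω₁ + 4g` is evaluated by the same substitution. -/

theorem kovalevskaya_R_eq_sq_add_sq {ω₁ ω₂ ω₃ ν₁ ν₂ ν₃ h g k : ℝ}
    (hunit : ν₁ ^ 2 + ν₂ ^ 2 + ν₃ ^ 2 = 1)
    (hh : 2 * h = 2 * (ω₁ ^ 2 + ω₂ ^ 2) + ω₃ ^ 2 - 2 * ν₁)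
    (hg : 2 * g = 2 * (ω₁ * ν₁ + ω₂ * ν₂) + ω₃ * ν₃)
    (hk : k = (ω₁ ^ 2 - ω₂ ^ 2 + ν₁) ^ 2 + (2 * ω₁ * ω₂ + ν₂) ^ 2) :
    -(ω₁ ^ 2 + ω₂ ^ 2) ^ 2 + 2 * h * (ω₁ ^ 2 + ω₂ ^ 2) + 4 * g * ω₁ + 1 - k =
      (ω₁ * ω₃ + ν₃) ^ 2 + ω₂ ^ 2 * ω₃ ^ 2 := by
  subst hk
  linear_combination (ω₁ ^ 2 + ω₂ ^ 2) * hh + 2 * ω₁ * hg - hunit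

theorem hasDerivAt_kovalevskaya_quartic (h g k x : ℝ) :
    HasDerivAt (fun x : ℝ => -x ^ 4 + 2 * h * x ^ 2 + 4 * g * x + 1 - k)
      (-4 * x ^ 3 + 4 * h * x + 4 * g) x := by
  refine (((((hasDerivAt_pow 4 x).neg).add ((hasDerivAt_pow 2 x).const_mul (2 * h))).add
    ((hasDerivAt_id x).const_mul (4 * g))).add_const 1).sub_const k |>.congr_deriv ?_
  norm_num
  ring

/-- The key identity of Chapter 6:
`R(x₁,x₂) = (ω₁ω₃ + ν₃)² + ω₂²ω₃²` in the Kovalevskaya case, and its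
consequence for `ω₂ = 0`: `R(ω₁) = (ω₁ω₃ + ν₃)²`, `R'(ω₁) = 2ω₃(ω₁ω₃ + ν₃)`. -/
theorem stmt17 (ω ν : Fin 3 → ℝ)
    (hunit : ν 0 ^ 2 + ν 1 ^ 2 + ν 2 ^ 2 = 1) (h g k : ℝ)
    (hh : 2*h = 2*(ω 0 ^ 2 + ω 1 ^ 2) + ω 2 ^ 2 - 2 * ν 0)
    (hg : 2*g = 2*(ω 0 * ν 0 + ω 1 * ν 1) + ω 2 * ν 2)
    (hk : k = (ω 0 ^ 2 - ω 1 ^ 2 + ν 0)^2 + (2 * ω 0 * ω 1 + ν 1)^2) :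
    (-(ω 0 ^ 2 + ω 1 ^ 2)^2 + 2*h*(ω 0 ^ 2 + ω 1 ^ 2) + 4*g*(ω 0) + 1 - k =
      (ω 0 * ω 2 + ν 2)^2 + ω 1 ^ 2 * ω 2 ^ 2) ∧
    (ω 1 = 0 →
      (-(ω 0)^4 + 2*h*(ω 0)^2 + 4*g*(ω 0) + 1 - k = (ω 0 * ω 2 + ν 2)^2 ∧
       deriv (fun x : ℝ => -x^4 + 2*h*x^2 + 4*g*x + 1 - k) (ω 0) =
         2 * ω 2 * (ω 0 * ω 2 + ν 2))) := by
  have hR := kovalevskaya_R_eq_sq_add_sq hunit hh hg hk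
  refine ⟨hR, fun hω₁ => ⟨?_, ?_⟩⟩
  · rw [hω₁] at hR
    linear_combination hR
  · rw [(hasDerivAt_kovalevskaya_quartic h g k (ω 0)).deriv]
    rw [hω₁] at hh hg
    linear_combination 2 * ω 0 * hh + 2 * hg
end

section
/- Let ω, ν ∈ ℝ³ satisfy ν₁² + ν₂² + ν₃² = 1, and suppose the gradients in ℝ⁶ at (ω, ν) of the four functions H' = 2(ω₁² + ω₂²) + ω₃² − 2ν₁, G' = 2(ω₁ν₁ + ω₂ν₂) + ω₃ν₃, Γ = ν₁² + ν₂² + ν₃², and K = (ω₁² − ω₂² + ν₁)² + (2ω₁ω₂ + ν₂)² are linearly dependent. Define h, g, k by H' = 2h, G' = 2g, K = k (note k ≥ 0 automatically). If g ≠ 0 and h = 2g² + √k, then 16·g⁴·k ≤ 1 (equivalently, √k ≤ 1/(4g²)). -/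
/-!
Write `s = √k`. A vanishing combination `a dH' + b dG' + c dΓ + d dK = 0` is six polynomial
equations in `(ω, ν)`. Splitting on the vanishing of `d`, `b`, `ω₃`, `ν₃`, every case either
forces `K = 0` (so `s = 0`), contradicts `g ≠ 0` or `|ν| = 1`, or puts the point in one of three
families, on each of which the branch relation `h = 2g² + s` makes `1 - 4g²s` visibly nonnegative:
* `ω₂ = 0, ν₃ = -ω₃ω₁`, which reduces to two variables;
* the planar family `ω₃ = ν₃ = 0`, where `1 - 4g²s = (s - g² - m²)²` with `m = ω₂ν₁ - ω₁ν₂`;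
* the family `2gν₃ = ω₃`, where `(1 - 4g²s)ν₃² = (ν₃ + ω₃ω₁)² + (ω₃ω₂)²`.

Squaring `4g²√k ≤ 1` gives the claim.
-/

lemma four_mul_sq_mul_le_one {x u s : ℝ} (hs : 0 ≤ s)
    (hsx : s = x^2 - u - 2*x^2*u^2) (hsq : s^2 = x^4 + 1 + 2*x^2*u) :
    4*(x*u)^2*s ≤ 1 := by
  have key : (1 - u^2)*(2*x^2*u + 1)^2 = 0 := by
    linear_combination (s + (x^2 - u - 2*x^2*u^2))*hsx - hsq
  rcases mul_eq_zero.mp key with hu | hxu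
  · rcases mul_self_eq_one_iff.mp (by linear_combination -hu : u*u = 1) with rfl | rfl
    · nlinarith [sq_nonneg x]
    · nlinarith [sq_nonneg (2*x^2 - 1)]
  · have hxu' : 2*x^2*u = -1 := by linear_combination pow_eq_zero_iff two_ne_zero |>.mp hxu
    have hs' : s = x^2 := by linear_combination hsx - u*hxu'
    exact le_of_eq (by linear_combination 4*x^2*u^2*hs' + (2*x^2*u - 1)*hxu')

/-- A point of the upper branch `h = 2g² + √k`, with `s` standing for `√k`. -/
structure UpperBranchPoint (ω₁ ω₂ ω₃ ν₁ ν₂ ν₃ g s : ℝ) : Prop where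
  unit : ν₁^2 + ν₂^2 + ν₃^2 = 1
  area : 2*g = 2*(ω₁*ν₁ + ω₂*ν₂) + ω₃*ν₃
  energy : 2*(2*g^2 + s) = 2*(ω₁^2 + ω₂^2) + ω₃^2 - 2*ν₁
  kovalevskaya : s^2 = (ω₁^2 - ω₂^2 + ν₁)^2 + (2*ω₁*ω₂ + ν₂)^2
  nonneg : 0 ≤ s

namespace UpperBranchPoint

variable {ω₁ ω₂ ω₃ ν₁ ν₂ ν₃ g s : ℝ}

lemma bound_of_kovalevskaya_eq_zero (P : UpperBranchPoint ω₁ ω₂ ω₃ ν₁ ν₂ ν₃ g s)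
    (hZ₁ : ω₁^2 - ω₂^2 + ν₁ = 0) (hZ₂ : 2*ω₁*ω₂ + ν₂ = 0) : 4*g^2*s ≤ 1 := by
  have hs : s = 0 := pow_eq_zero_iff two_ne_zero |>.mp
    (by linear_combination P.kovalevskaya + (ω₁^2 - ω₂^2 + ν₁)*hZ₁ + (2*ω₁*ω₂ + ν₂)*hZ₂)
  simp [hs]

lemma bound_of_ω₂_eq_zero (P : UpperBranchPoint ω₁ 0 ω₃ ν₁ ν₂ ν₃ g s)
    (hν₃ : ν₃ + ω₃*ω₁ = 0) : 4*g^2*s ≤ 1 := by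
  have hg : g = ω₁*(ν₁ - ω₃^2/2) := by linear_combination P.area/2 + (ω₃/2)*hν₃
  rw [hg]
  refine four_mul_sq_mul_le_one P.nonneg ?_ ?_
  · linear_combination P.energy/2 - 2*(g + ω₁*(ν₁ - ω₃^2/2))*hg
  · linear_combination P.kovalevskaya + P.unit - (ν₃ - ω₃*ω₁)*hν₃

lemma bound_of_planar (P : UpperBranchPoint ω₁ ω₂ 0 ν₁ ν₂ 0 g s)
    (hrel : (ν₁^2 - ν₂^2)*(2*ω₁*ω₂ + ν₂) - 2*ν₁*ν₂*(ω₁^2 - ω₂^2 + ν₁) = 0) :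
    4*g^2*s ≤ 1 := by
  have hg : g = ω₁*ν₁ + ω₂*ν₂ := by linear_combination P.area/2
  have hν₂ : ν₂ = 2*g*(ω₂*ν₁ - ω₁*ν₂) := by
    linear_combination -2*(ω₂*ν₁ - ω₁*ν₂)*hg - hrel - ν₂*P.unit
  have hν₁ : ν₁ = (ω₂*ν₁ - ω₁*ν₂)^2 - g^2 - s := by
    linear_combination P.energy/2 - (g + (ω₁*ν₁ + ω₂*ν₂))*hg - (ω₁^2 + ω₂^2)*P.unit
  have hsq : 1 - 4*g^2*s = (s - g^2 - (ω₂*ν₁ - ω₁*ν₂)^2)^2 := by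
    linear_combination -P.unit + (ν₁ + ((ω₂*ν₁ - ω₁*ν₂)^2 - g^2 - s))*hν₁ +
      (ν₂ + 2*g*(ω₂*ν₁ - ω₁*ν₂))*hν₂
  nlinarith [sq_nonneg (s - g^2 - (ω₂*ν₁ - ω₁*ν₂)^2)]

lemma bound_of_spatial (P : UpperBranchPoint ω₁ ω₂ ω₃ ν₁ ν₂ ν₃ g s) (hω₃ : ω₃ ≠ 0)
    (hν₃ : ν₃ ≠ 0) (hD : (ν₃ + ω₃*ω₁)^2 + (ω₃*ω₂)^2 ≠ 0)
    (h₁ : ω₃*(ν₁*(ν₃ + ω₃*ω₁) + ν₂*(ω₃*ω₂)) = 2*ν₃*(ω₁*ν₃ + (ω₁^2 + ω₂^2)*ω₃))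
    (h₂ : ν₂*(ν₃ + ω₃*ω₁) - ν₁*(ω₃*ω₂) = 0) :
    4*g^2*s ≤ 1 := by
  have hν₁D : ν₁*((ν₃ + ω₃*ω₁)^2 + (ω₃*ω₂)^2) =
      (ν₁*(ν₃ + ω₃*ω₁) + ν₂*(ω₃*ω₂))*(ν₃ + ω₃*ω₁) := by
    linear_combination (-(ω₃*ω₂))*h₂
  have hν₂D : ν₂*((ν₃ + ω₃*ω₁)^2 + (ω₃*ω₂)^2) =
      (ν₁*(ν₃ + ω₃*ω₁) + ν₂*(ω₃*ω₂))*(ω₃*ω₂) := by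
    linear_combination (ν₃ + ω₃*ω₁)*h₂
  have hν₃D : ω₃^2*(1 - ν₃^2)*((ν₃ + ω₃*ω₁)^2 + (ω₃*ω₂)^2) =
      4*ν₃^2*(ω₁*ν₃ + (ω₁^2 + ω₂^2)*ω₃)^2 := by
    linear_combination -ω₃^2*((ν₃ + ω₃*ω₁)^2 + (ω₃*ω₂)^2)*P.unit +
      ω₃^2*(ν₂*(ν₃ + ω₃*ω₁) - ν₁*(ω₃*ω₂))*h₂ +
      (ω₃*(ν₁*(ν₃ + ω₃*ω₁) + ν₂*(ω₃*ω₂)) + 2*ν₃*(ω₁*ν₃ + (ω₁^2 + ω₂^2)*ω₃))*h₁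
  have hgD : 2*g*ω₃*((ν₃ + ω₃*ω₁)^2 + (ω₃*ω₂)^2) =
      ν₃*(4*(ω₁*ν₃ + (ω₁^2 + ω₂^2)*ω₃)^2 + ω₃^2*((ν₃ + ω₃*ω₁)^2 + (ω₃*ω₂)^2)) := by
    linear_combination ω₃*((ν₃ + ω₃*ω₁)^2 + (ω₃*ω₂)^2)*P.area + 2*ω₃*ω₁*hν₁D +
      2*ω₃*ω₂*hν₂D + 2*(ω₁*ν₃ + (ω₁^2 + ω₂^2)*ω₃)*h₁
  have hgν₃ : 2*g*ν₃ = ω₃ := by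
    have h : ω₃*((ν₃ + ω₃*ω₁)^2 + (ω₃*ω₂)^2)*ν₃*(2*g*ν₃ - ω₃) = 0 := by
      linear_combination ν₃^2*hgD - ν₃*hν₃D
    linear_combination (mul_eq_zero_iff_left (mul_ne_zero (mul_ne_zero hω₃ hD) hν₃)).mp h
  have hs : ω₃^2*s = ν₃^2 - ((ν₃ + ω₃*ω₁)^2 + (ω₃*ω₂)^2) := by
    have h : ν₃^2*((ν₃ + ω₃*ω₁)^2 + (ω₃*ω₂)^2)*
        (ω₃^2*s - (ν₃^2 - ((ν₃ + ω₃*ω₁)^2 + (ω₃*ω₂)^2))) = 0 := by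
      linear_combination (ν₃^2*((ν₃ + ω₃*ω₁)^2 + (ω₃*ω₂)^2)*ω₃^2/2)*P.energy -
        ν₃^2*ω₃*(ν₃ + ω₃*ω₁)*h₁ - ν₃^2*ω₃^2*hν₁D -
        (((ν₃ + ω₃*ω₁)^2 + (ω₃*ω₂)^2)*ω₃^2/2)*(2*g*ν₃ + ω₃)*hgν₃ - (ω₃^2/2)*hν₃D
    linear_combination (mul_eq_zero_iff_left (mul_ne_zero (pow_ne_zero 2 hν₃) hD)).mp h
  have key : (1 - 4*g^2*s)*ν₃^2 = (ν₃ + ω₃*ω₁)^2 + (ω₃*ω₂)^2 := by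
    linear_combination -s*(2*g*ν₃ + ω₃)*hgν₃ - hs
  have hpos : 0 ≤ (1 - 4*g^2*s)*ν₃^2 := key ▸ by positivity
  exact sub_nonneg.mp (nonneg_of_mul_nonneg_left hpos (pow_two_pos_of_ne_zero hν₃))

end UpperBranchPoint

/-- The six components `∂ω₁, ∂ω₂, ∂ω₃, ∂ν₁, ∂ν₂, ∂ν₃` of `a dH' + b dG' + c dΓ + d dK = 0`. -/
structure CriticalRelation (a b c d ω₁ ω₂ ω₃ ν₁ ν₂ ν₃ : ℝ) : Prop where
  dω₁ : 4*a*ω₁ + 2*b*ν₁ + 4*d*((ω₁^2 - ω₂^2 + ν₁)*ω₁ + (2*ω₁*ω₂ + ν₂)*ω₂) = 0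
  dω₂ : 4*a*ω₂ + 2*b*ν₂ + 4*d*((2*ω₁*ω₂ + ν₂)*ω₁ - (ω₁^2 - ω₂^2 + ν₁)*ω₂) = 0
  dω₃ : 2*a*ω₃ + b*ν₃ = 0
  dν₁ : -(2*a) + 2*b*ω₁ + 2*c*ν₁ + 2*d*(ω₁^2 - ω₂^2 + ν₁) = 0
  dν₂ : 2*b*ω₂ + 2*c*ν₂ + 2*d*(2*ω₁*ω₂ + ν₂) = 0
  dν₃ : b*ω₃ + 2*c*ν₃ = 0

namespace CriticalRelation

variable {a b c d ω₁ ω₂ ω₃ ν₁ ν₂ ν₃ g s : ℝ}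

lemma b_ne_zero_of_d_eq_zero (R : CriticalRelation a b c 0 ω₁ ω₂ ω₃ ν₁ ν₂ ν₃)
    (P : UpperBranchPoint ω₁ ω₂ ω₃ ν₁ ν₂ ν₃ g s) (hg : g ≠ 0)
    (hne : ¬(a = 0 ∧ b = 0 ∧ c = 0)) : b ≠ 0 := by
  rintro rfl
  have ha : a = 0 := (mul_eq_zero_iff_right hg).mp
    (by linear_combination (ν₁/4)*R.dω₁ + (ν₂/4)*R.dω₂ + (ν₃/4)*R.dω₃ + (a/2)*P.area)
  subst ha
  have hc : c^2 = 0 := by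
    linear_combination (c*ν₁/2)*R.dν₁ + (c*ν₂/2)*R.dν₂ + (c*ν₃/2)*R.dν₃ - c^2*P.unit
  exact hne ⟨rfl, rfl, pow_eq_zero_iff two_ne_zero |>.mp hc⟩

lemma bound_of_d_eq_zero (R : CriticalRelation a b c 0 ω₁ ω₂ ω₃ ν₁ ν₂ ν₃)
    (P : UpperBranchPoint ω₁ ω₂ ω₃ ν₁ ν₂ ν₃ g s) (hb : b ≠ 0) : 4*g^2*s ≤ 1 := by
  have hbν₁ : b*ν₁ = -(2*a*ω₁) := by linear_combination R.dω₁/2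
  have hbν₂ : b*ν₂ = -(2*a*ω₂) := by linear_combination R.dω₂/2
  have hbν₃ : b*ν₃ = -(2*a*ω₃) := by linear_combination R.dω₃
  have hω₁ : (b^2 - 2*a*c)*ω₁ = a*b := by linear_combination (b/2)*R.dν₁ - c*hbν₁
  have hω₂ : (b^2 - 2*a*c)*ω₂ = 0 := by linear_combination (b/2)*R.dν₂ - c*hbν₂
  have hω₃ : (b^2 - 4*a*c)*ω₃ = 0 := by linear_combination b*R.dν₃ - 2*c*hbν₃
  have hdisc : b^2 - 2*a*c ≠ 0 := by
    intro h
    have ha : a = 0 := (mul_eq_zero_iff_right hb).mp (by linear_combination -hω₁ + ω₁*h)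
    exact hb (pow_eq_zero_iff two_ne_zero |>.mp (by linear_combination h + 2*c*ha))
  have hω₂0 : ω₂ = 0 := (mul_eq_zero_iff_left hdisc).mp hω₂
  have hν₂0 : ν₂ = 0 := (mul_eq_zero_iff_left hb).mp (by linear_combination hbν₂ - 2*a*hω₂0)
  by_cases hdisc' : b^2 - 4*a*c = 0
  · have hac : a*c ≠ 0 := fun h =>
      hb (pow_eq_zero_iff two_ne_zero |>.mp (by linear_combination hdisc' + 4*h))
    have hbω₁ : b*ω₁ = 2*a := by
      have h : a*c*(b*ω₁ - 2*a) = 0 := by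
        linear_combination (b/2)*hω₁ + ((a - b*ω₁)/2)*hdisc'
      linear_combination (mul_eq_zero_iff_left hac).mp h
    have hZ₁ : ω₁^2 - ω₂^2 + ν₁ = 0 := (mul_eq_zero_iff_left (pow_ne_zero 2 hb)).mp
      (by linear_combination b*hbν₁ + b*ω₁*hbω₁ - b^2*ω₂*hω₂0)
    exact P.bound_of_kovalevskaya_eq_zero hZ₁ (by rw [hω₂0, hν₂0]; ring)
  · have hω₃0 : ω₃ = 0 := (mul_eq_zero_iff_left hdisc').mp hω₃
    have hν₃0 : ν₃ = 0 := (mul_eq_zero_iff_left hb).mp (by linear_combination hbν₃ - 2*a*hω₃0)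
    subst hω₂0
    exact P.bound_of_ω₂_eq_zero (by rw [hω₃0, hν₃0]; ring)

lemma bound_of_ω₃_eq_zero_of_ν₃_eq_zero (R : CriticalRelation a b c d ω₁ ω₂ 0 ν₁ ν₂ 0)
    (P : UpperBranchPoint ω₁ ω₂ 0 ν₁ ν₂ 0 g s) (hd : d ≠ 0) : 4*g^2*s ≤ 1 := by
  have h : ω₂*((ν₁^2 - ν₂^2)*(2*ω₁*ω₂ + ν₂) - 2*ν₁*ν₂*(ω₁^2 - ω₂^2 + ν₁)) = 0 :=
    (mul_eq_zero_iff_left hd).mp (by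
      linear_combination ((-ν₂^2 + 2*ω₂^2*ν₁ - 2*ω₁*ω₂*ν₂)/4)*R.dω₁ +
        ((ν₁*ν₂ - 2*ω₁*ω₂*ν₁ + 2*ω₁^2*ν₂)/4)*R.dω₂ + ((ω₂*ν₁*ν₂ - ω₁*ν₂^2)/2)*R.dν₁ +
        ((ω₁*ν₁*ν₂ - ω₂*ν₁^2)/2)*R.dν₂)
  rcases mul_eq_zero.mp h with hω₂ | hrel
  · subst hω₂
    exact P.bound_of_ω₂_eq_zero (by ring)
  · exact P.bound_of_planar hrel

lemma bound_of_ω₃_eq_zero (R : CriticalRelation a b c d ω₁ ω₂ 0 ν₁ ν₂ ν₃)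
    (P : UpperBranchPoint ω₁ ω₂ 0 ν₁ ν₂ ν₃ g s) (hg : g ≠ 0) (hd : d ≠ 0) (hν₃ : ν₃ ≠ 0) :
    4*g^2*s ≤ 1 := by
  have hb : b = 0 := (mul_eq_zero_iff_right hν₃).mp (by linear_combination R.dω₃)
  have hc : c = 0 := (mul_eq_zero_iff_right hν₃).mp (by linear_combination R.dν₃/2)
  subst hb hc
  have hZ₂ : 2*ω₁*ω₂ + ν₂ = 0 := (mul_eq_zero_iff_left hd).mp (by linear_combination R.dν₂/2)
  have h : (ω₁^2 - ω₂^2 + ν₁)*ω₁ = 0 := (mul_eq_zero_iff_left hd).mp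
    (by linear_combination (1/8)*R.dω₁ + (ω₁/4)*R.dν₁ - (d*ω₂/2)*hZ₂)
  rcases mul_eq_zero.mp h with hZ₁ | hω₁
  · exact P.bound_of_kovalevskaya_eq_zero hZ₁ hZ₂
  · exact absurd (by linear_combination P.area/2 + ν₁*hω₁ + ω₂*hZ₂ - 2*ω₂^2*hω₁) hg

lemma bound_of_ν₃_eq_zero (R : CriticalRelation a b c d ω₁ ω₂ ω₃ ν₁ ν₂ 0)
    (P : UpperBranchPoint ω₁ ω₂ ω₃ ν₁ ν₂ 0 g s) (hg : g ≠ 0) (hd : d ≠ 0) (hω₃ : ω₃ ≠ 0) :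
    4*g^2*s ≤ 1 := by
  have ha : a = 0 := (mul_eq_zero_iff_right hω₃).mp (by linear_combination R.dω₃/2)
  have hb : b = 0 := (mul_eq_zero_iff_right hω₃).mp (by linear_combination R.dν₃)
  subst ha hb
  have h₁ : (ω₁^2 - ω₂^2 + ν₁)*ω₁ + (2*ω₁*ω₂ + ν₂)*ω₂ = 0 :=
    (mul_eq_zero_iff_left hd).mp (by linear_combination R.dω₁/4)
  have h₂ : (2*ω₁*ω₂ + ν₂)*ω₁ - (ω₁^2 - ω₂^2 + ν₁)*ω₂ = 0 :=
    (mul_eq_zero_iff_left hd).mp (by linear_combination R.dω₂/4)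
  by_cases hω : ω₁^2 + ω₂^2 = 0
  · have hω₁ : ω₁ = 0 := by nlinarith
    have hω₂ : ω₂ = 0 := by nlinarith
    exact absurd (by linear_combination P.area/2 + ν₁*hω₁ + ν₂*hω₂) hg
  · exact P.bound_of_kovalevskaya_eq_zero
      ((mul_eq_zero_iff_left hω).mp (by linear_combination ω₁*h₁ - ω₂*h₂))
      ((mul_eq_zero_iff_left hω).mp (by linear_combination ω₂*h₁ + ω₁*h₂))

lemma bound_of_ω₃_ne_zero_of_ν₃_ne_zero (R : CriticalRelation a b c d ω₁ ω₂ ω₃ ν₁ ν₂ ν₃)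
    (P : UpperBranchPoint ω₁ ω₂ ω₃ ν₁ ν₂ ν₃ g s) (hd : d ≠ 0) (hω₃ : ω₃ ≠ 0) (hν₃ : ν₃ ≠ 0) :
    4*g^2*s ≤ 1 := by
  by_cases hb : b = 0
  · subst hb
    have ha : a = 0 := (mul_eq_zero_iff_right hω₃).mp (by linear_combination R.dω₃/2)
    have hc : c = 0 := (mul_eq_zero_iff_right hν₃).mp (by linear_combination R.dν₃/2)
    subst ha hc
    exact P.bound_of_kovalevskaya_eq_zero
      ((mul_eq_zero_iff_left hd).mp (by linear_combination R.dν₁/2))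
      ((mul_eq_zero_iff_left hd).mp (by linear_combination R.dν₂/2))
  have h₁ : ω₃*(ν₁*(ν₃ + ω₃*ω₁) + ν₂*(ω₃*ω₂)) = 2*ν₃*(ω₁*ν₃ + (ω₁^2 + ω₂^2)*ω₃) := by
    have h : b*(ν₁*ω₃*ν₃ + ω₃^2*(ν₁*ω₁ + ν₂*ω₂) - 2*ω₁*ν₃^2 - 2*(ω₁^2 + ω₂^2)*ν₃*ω₃) = 0 := by
      linear_combination (ν₃*ω₃/2)*R.dω₁ - 2*ω₁*ν₃*R.dω₃ - ω₁*ν₃*ω₃*R.dν₁ -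
        ω₂*ν₃*ω₃*R.dν₂ + ω₃*(ω₁*ν₁ + ω₂*ν₂)*R.dν₃
    linear_combination (mul_eq_zero_iff_left hb).mp h
  have h₂ : ν₂*(ν₃ + ω₃*ω₁) - ν₁*(ω₃*ω₂) = 0 := by
    have h : b*ω₃*(ν₂*(ν₃ + ω₃*ω₁) - ν₁*(ω₃*ω₂)) = 0 := by
      linear_combination (ν₃*ω₃/2)*R.dω₂ + ω₂*ν₃*ω₃*R.dν₁ - ω₁*ν₃*ω₃*R.dν₂ +
        ω₃*(ω₁*ν₂ - ω₂*ν₁)*R.dν₃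
    exact (mul_eq_zero_iff_left (mul_ne_zero hb hω₃)).mp h
  by_cases hD : (ν₃ + ω₃*ω₁)^2 + (ω₃*ω₂)^2 = 0
  · have hS₁ : ν₃ + ω₃*ω₁ = 0 := by nlinarith
    have hω₂ : ω₂ = 0 := (mul_eq_zero_iff_left hω₃).mp (by nlinarith)
    subst hω₂
    exact P.bound_of_ω₂_eq_zero hS₁
  · exact P.bound_of_spatial hω₃ hν₃ hD h₁ h₂

lemma bound (R : CriticalRelation a b c d ω₁ ω₂ ω₃ ν₁ ν₂ ν₃)
    (P : UpperBranchPoint ω₁ ω₂ ω₃ ν₁ ν₂ ν₃ g s) (hg : g ≠ 0) (hne : ¬(a = 0 ∧ b = 0 ∧ c = 0 ∧ d = 0)) : 4*g^2*s ≤ 1 := by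
  rcases eq_or_ne d 0 with rfl | hd
  · exact R.bound_of_d_eq_zero P (R.b_ne_zero_of_d_eq_zero P hg (by simpa using hne))
  rcases eq_or_ne ω₃ 0 with rfl | hω₃ <;> rcases eq_or_ne ν₃ 0 with rfl | hν₃
  · exact R.bound_of_ω₃_eq_zero_of_ν₃_eq_zero P hd
  · exact R.bound_of_ω₃_eq_zero P hg hd hν₃
  · exact R.bound_of_ν₃_eq_zero P hg hd hω₃
  · exact R.bound_of_ω₃_ne_zero_of_ν₃_ne_zero P hd hω₃ hν₃

end CriticalRelation

local notation "𝔼" => (Fin 3 → ℝ) × (Fin 3 → ℝ)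

noncomputable abbrev projω (i : Fin 3) : 𝔼 →L[ℝ] ℝ :=
  (ContinuousLinearMap.proj i).comp (ContinuousLinearMap.fst ℝ _ _)

noncomputable abbrev projν (i : Fin 3) : 𝔼 →L[ℝ] ℝ :=
  (ContinuousLinearMap.proj i).comp (ContinuousLinearMap.snd ℝ _ _)

section Gradients

variable (ω ν : Fin 3 → ℝ)

lemma hasFDerivAt_projω (i : Fin 3) : HasFDerivAt (fun p : 𝔼 => p.1 i) (projω i) (ω, ν) :=
  (projω i).hasFDerivAt

lemma hasFDerivAt_projν (i : Fin 3) : HasFDerivAt (fun p : 𝔼 => p.2 i) (projν i) (ω, ν) :=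
  (projν i).hasFDerivAt

lemma hasFDerivAt_energy :
    HasFDerivAt (fun p : 𝔼 => 2*(p.1 0 ^ 2 + p.1 1 ^ 2) + p.1 2 ^ 2 - 2 * p.2 0)
      ((4*ω 0) • projω 0 + (4*ω 1) • projω 1 + (2*ω 2) • projω 2 - (2:ℝ) • projν 0) (ω, ν) := by
  have hω := hasFDerivAt_projω ω ν
  have hν := hasFDerivAt_projν ω ν
  refine (((((hω 0).pow 2).add ((hω 1).pow 2)).const_mul 2).add ((hω 2).pow 2) |>.sub
    ((hν 0).const_mul 2)).congr_fderiv ?_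
  ext w <;> simp
  ring

lemma hasFDerivAt_area :
    HasFDerivAt (fun p : 𝔼 => 2*(p.1 0 * p.2 0 + p.1 1 * p.2 1) + p.1 2 * p.2 2)
      ((2*ν 0) • projω 0 + (2*ν 1) • projω 1 + ν 2 • projω 2 +
        (2*ω 0) • projν 0 + (2*ω 1) • projν 1 + ω 2 • projν 2) (ω, ν) := by
  have hω := hasFDerivAt_projω ω ν
  have hν := hasFDerivAt_projν ω ν
  refine ((((hω 0).mul (hν 0)).add ((hω 1).mul (hν 1))).const_mul 2 |>.add
    ((hω 2).mul (hν 2))).congr_fderiv ?_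
  ext w <;> simp <;> ring

lemma hasFDerivAt_geometric :
    HasFDerivAt (fun p : 𝔼 => p.2 0 ^ 2 + p.2 1 ^ 2 + p.2 2 ^ 2)
      ((2*ν 0) • projν 0 + (2*ν 1) • projν 1 + (2*ν 2) • projν 2) (ω, ν) := by
  have hν := hasFDerivAt_projν ω ν
  refine ((((hν 0).pow 2).add ((hν 1).pow 2)).add ((hν 2).pow 2)).congr_fderiv ?_
  ext w <;> simp

lemma hasFDerivAt_kovalevskaya :
    HasFDerivAt (fun p : 𝔼 =>
        (p.1 0 ^ 2 - p.1 1 ^ 2 + p.2 0)^2 + (2 * p.1 0 * p.1 1 + p.2 1)^2)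
      ((4*((ω 0 ^ 2 - ω 1 ^ 2 + ν 0)*ω 0 + (2*ω 0*ω 1 + ν 1)*ω 1)) • projω 0 +
        (4*((2*ω 0*ω 1 + ν 1)*ω 0 - (ω 0 ^ 2 - ω 1 ^ 2 + ν 0)*ω 1)) • projω 1 +
        (2*(ω 0 ^ 2 - ω 1 ^ 2 + ν 0)) • projν 0 + (2*(2*ω 0*ω 1 + ν 1)) • projν 1) (ω, ν) := by
  have hω := hasFDerivAt_projω ω ν
  have hν := hasFDerivAt_projν ω ν
  have hZ₁ := (((hω 0).pow 2).sub ((hω 1).pow 2)).add (hν 0)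
  have hZ₂ := (((hω 0).const_mul 2).mul (hω 1)).add (hν 1)
  refine ((hZ₁.pow 2).add (hZ₂.pow 2)).congr_fderiv ?_
  ext w <;> simp <;> ring

end Gradients

lemma exists_criticalRelation {ω ν : Fin 3 → ℝ} (hdep : ¬ LinearIndependent ℝ
      ![fderiv ℝ (fun p : 𝔼 => 2*(p.1 0 ^ 2 + p.1 1 ^ 2) + p.1 2 ^ 2 - 2 * p.2 0) (ω, ν),
        fderiv ℝ (fun p : 𝔼 => 2*(p.1 0 * p.2 0 + p.1 1 * p.2 1) + p.1 2 * p.2 2) (ω, ν),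
        fderiv ℝ (fun p : 𝔼 => p.2 0 ^ 2 + p.2 1 ^ 2 + p.2 2 ^ 2) (ω, ν),
        fderiv ℝ (fun p : 𝔼 =>
          (p.1 0 ^ 2 - p.1 1 ^ 2 + p.2 0)^2 + (2 * p.1 0 * p.1 1 + p.2 1)^2) (ω, ν)]) :
    ∃ a b c d : ℝ, ¬(a = 0 ∧ b = 0 ∧ c = 0 ∧ d = 0) ∧
      CriticalRelation a b c d (ω 0) (ω 1) (ω 2) (ν 0) (ν 1) (ν 2) := by
  obtain ⟨l, hl, i, hi⟩ := Fintype.not_linearIndependent_iff.mp hdep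
  simp only [Fin.sum_univ_four, Matrix.cons_val_zero, Matrix.cons_val_one, Matrix.cons_val_two,
    Matrix.cons_val_three, Matrix.tail_cons, Matrix.head_cons, (hasFDerivAt_energy ω ν).fderiv, (hasFDerivAt_area ω ν).fderiv,
    (hasFDerivAt_geometric ω ν).fderiv, (hasFDerivAt_kovalevskaya ω ν).fderiv] at hl
  have component (w : 𝔼) := DFunLike.congr_fun hl w
  have e₁ := component (Pi.single 0 1, 0)
  have e₂ := component (Pi.single 1 1, 0)
  have e₃ := component (Pi.single 2 1, 0)
  have e₄ := component (0, Pi.single 0 1)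
  have e₅ := component (0, Pi.single 1 1)
  have e₆ := component (0, Pi.single 2 1)
  simp only [add_apply, smul_apply, sub_apply,
    ContinuousLinearMap.comp_apply, ContinuousLinearMap.coe_fst', ContinuousLinearMap.coe_snd',
    ContinuousLinearMap.proj_apply, Pi.single_eq_same, Pi.single_eq_of_ne, ne_eq, Fin.reduceEq,
    not_false_eq_true, Pi.zero_apply, zero_apply, smul_eq_mul]
    at e₁ e₂ e₃ e₄ e₅ e₆
  refine ⟨l 0, l 1, l 2, l 3, fun ⟨h0, h1, h2, h3⟩ => ?_,
    ⟨by linear_combination e₁, by linear_combination e₂, by linear_combination e₃,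
      by linear_combination e₄, by linear_combination e₅, by linear_combination e₆⟩⟩
  fin_cases i <;> simp_all

/-- On the upper branch `h = 2g² + √k` of the parabola `k = (h − 2g²)²` (the
3rd Appelrot class) with `g ≠ 0`, real critical points of the Kovalevskaya
integral map exist only for `16g⁴k ≤ 1`. -/
theorem stmt19 (ω ν : Fin 3 → ℝ)
    (hunit : ν 0 ^ 2 + ν 1 ^ 2 + ν 2 ^ 2 = 1)
    (hdep : ¬ LinearIndependent ℝ
      ![fderiv ℝ (fun p : (Fin 3 → ℝ) × (Fin 3 → ℝ) =>
          2*(p.1 0 ^ 2 + p.1 1 ^ 2) + p.1 2 ^ 2 - 2 * p.2 0) (ω, ν),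
        fderiv ℝ (fun p : (Fin 3 → ℝ) × (Fin 3 → ℝ) =>
          2*(p.1 0 * p.2 0 + p.1 1 * p.2 1) + p.1 2 * p.2 2) (ω, ν),
        fderiv ℝ (fun p : (Fin 3 → ℝ) × (Fin 3 → ℝ) =>
          p.2 0 ^ 2 + p.2 1 ^ 2 + p.2 2 ^ 2) (ω, ν),
        fderiv ℝ (fun p : (Fin 3 → ℝ) × (Fin 3 → ℝ) =>
          (p.1 0 ^ 2 - p.1 1 ^ 2 + p.2 0)^2 + (2 * p.1 0 * p.1 1 + p.2 1)^2) (ω, ν)])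
    (h g k : ℝ)
    (hh : 2*h = 2*(ω 0 ^ 2 + ω 1 ^ 2) + ω 2 ^ 2 - 2 * ν 0)
    (hg : 2*g = 2*(ω 0 * ν 0 + ω 1 * ν 1) + ω 2 * ν 2)
    (hk : k = (ω 0 ^ 2 - ω 1 ^ 2 + ν 0)^2 + (2 * ω 0 * ω 1 + ν 1)^2)
    (hg0 : g ≠ 0) (hbranch : h = 2*g^2 + Real.sqrt k) :
    16 * g^4 * k ≤ 1 := by
  obtain ⟨a, b, c, d, hne, R⟩ := exists_criticalRelation hdep
  have hk0 : 0 ≤ k := hk ▸ by positivity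
  have P : UpperBranchPoint (ω 0) (ω 1) (ω 2) (ν 0) (ν 1) (ν 2) g (√k) :=
    ⟨hunit, hg, hbranch ▸ hh, by rw [Real.sq_sqrt hk0, hk], Real.sqrt_nonneg k⟩
  calc 16*g^4*k = (4*g^2*√k)^2 := by rw [mul_pow, Real.sq_sqrt hk0]; ring
    _ ≤ 1 := pow_le_one₀ (by positivity) (R.bound P hg0 hne)
end
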